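/- arXiv:2112.07183 — 2 statements merged into one kernel-verified Lean document; each statement's English description precedes it below -/
import Mathlib

section
/- Let X be a Banach space and suppose u : [0, T] → X satisfies the interpolation bound ‖u(t)‖_{k+2} ≤ C ‖u(t)‖_k^{1−θ} ‖u(t)‖_N^{θ} with θ = 2/(N−k), together with ‖u(t)‖_N ≤ ε e^{βt} and ‖u(t)‖_k ≤ ε e^{−αt} for all t ∈ [0,T], where 2β < (N−k−2)α and N−k>2. Then the integral ∫₀^T e^{αt} ‖u(t)‖_{k+2} ‖u(t)‖_k dt ≤ C' ε² for a constant C' depending only on C, α, β, N, k (uniformly in T). -/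
open Real

/-- The key quadratic-nonlinearity bound in the decay bootstrap: given the interpolation
inequality `‖u(t)‖_{k+2} ≤ C ‖u(t)‖_k^{1−θ} ‖u(t)‖_N^θ` with `θ = 2/(N−k)`, together with
the bootstrap bounds `‖u(t)‖_N ≤ ε e^{βt}` and `‖u(t)‖_k ≤ ε e^{−αt}` on `[0,T]`, where
`2β < (N−k−2)α` and `N−k > 2`, the integral `∫₀^T e^{αt}‖u(t)‖_{k+2}‖u(t)‖_k dt` is
bounded by `C' ε²` with `C'` depending only on `C, α, β, N, k` (uniformly in `T`).
Here `Nrm j t` plays the role of `‖u(t)‖_j`. -/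
theorem decay_bootstrap_interpolation_bound
    (C α β : ℝ) (N k : ℕ) (hC : 0 < C) (hα : 0 < α) (hβ : 0 < β)
    (h1 : 2 * β < ((N : ℝ) - (k : ℝ) - 2) * α) (h2 : 2 < (N : ℝ) - (k : ℝ)) :
    ∃ C' : ℝ, 0 < C' ∧
      ∀ (T ε : ℝ) (Nrm : ℕ → ℝ → ℝ),
        0 ≤ T → 0 ≤ ε →
        (∀ j t, 0 ≤ Nrm j t) →
        (∀ j, ContinuousOn (Nrm j) (Set.Icc 0 T)) →
        (∀ t ∈ Set.Icc (0 : ℝ) T,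
          Nrm (k + 2) t ≤
            C * Nrm k t ^ (1 - 2 / ((N : ℝ) - (k : ℝ)))
              * Nrm N t ^ (2 / ((N : ℝ) - (k : ℝ)))) →
        (∀ t ∈ Set.Icc (0 : ℝ) T, Nrm N t ≤ ε * Real.exp (β * t)) →
        (∀ t ∈ Set.Icc (0 : ℝ) T, Nrm k t ≤ ε * Real.exp (-α * t)) →
        (∫ t in (0 : ℝ)..T, Real.exp (α * t) * Nrm (k + 2) t * Nrm k t) ≤ C' * ε ^ 2 := by
  have hNk : (0:ℝ) < (N : ℝ) - (k : ℝ) := by linarith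
  set θ : ℝ := 2 / ((N : ℝ) - (k : ℝ)) with hθdef
  have hθpos : 0 < θ := by positivity
  have hθlt : θ < 1 := by rw [hθdef, div_lt_one hNk]; linarith
  set c : ℝ := θ * (α + β) - α with hcdef
  have hc : c < 0 := by
    rw [hcdef, hθdef, sub_neg, div_mul_eq_mul_div, div_lt_iff₀ hNk]
    nlinarith
  refine ⟨C / (-c), div_pos hC (neg_pos.mpr hc), ?_⟩
  intro T ε Nrm hT hε hpos hcont hint hN hk
  have huIcc : Set.uIcc (0:ℝ) T = Set.Icc 0 T := Set.uIcc_of_le hT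
  rcases eq_or_lt_of_le hε with h0 | hε
  · -- ε = 0 case: integrand vanishes
    have hzero : ∀ t ∈ Set.Icc (0:ℝ) T,
        Real.exp (α * t) * Nrm (k + 2) t * Nrm k t = 0 := by
      intro t ht
      have hk0 : Nrm k t = 0 :=
        le_antisymm (by have := hk t ht; rw [← h0] at this; simpa using this) (hpos k t)
      simp [hk0]
    have : (∫ t in (0:ℝ)..T, Real.exp (α * t) * Nrm (k + 2) t * Nrm k t)
        = ∫ t in (0:ℝ)..T, (0:ℝ) := by
      apply intervalIntegral.integral_congr
      intro t ht
      rw [huIcc] at ht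
      exact hzero t ht
    rw [this, ← h0]
    simp
  · -- ε > 0 case
    have hle : ∀ t ∈ Set.Icc (0:ℝ) T,
        Real.exp (α * t) * Nrm (k + 2) t * Nrm k t ≤ C * ε ^ 2 * Real.exp (c * t) := by
      intro t ht
      have h2' := hint t ht
      have hNb := hN t ht
      have hkb := hk t ht
      have hb1 : Nrm k t ^ (1 - θ) ≤ (ε * Real.exp (-α * t)) ^ (1 - θ) :=
        Real.rpow_le_rpow (hpos k t) hkb (by linarith)
      have hb2 : Nrm N t ^ θ ≤ (ε * Real.exp (β * t)) ^ θ :=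
        Real.rpow_le_rpow (hpos N t) hNb hθpos.le
      have step1 : Real.exp (α * t) * Nrm (k + 2) t * Nrm k t ≤
          Real.exp (α * t) * (C * (ε * Real.exp (-α * t)) ^ (1 - θ)
            * (ε * Real.exp (β * t)) ^ θ) * (ε * Real.exp (-α * t)) := by
        have e1 : Real.exp (α * t) * Nrm (k + 2) t * Nrm k t ≤
            Real.exp (α * t) * (C * Nrm k t ^ (1 - θ) * Nrm N t ^ θ) * Nrm k t := by
          apply mul_le_mul_of_nonneg_right _ (hpos k t)
          exact mul_le_mul_of_nonneg_left h2' (Real.exp_pos _).le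
        refine e1.trans ?_
        apply mul_le_mul
        · apply mul_le_mul_of_nonneg_left _ (Real.exp_pos _).le
          apply mul_le_mul (mul_le_mul_of_nonneg_left hb1 hC.le) hb2
            (Real.rpow_nonneg (hpos N t) _)
          positivity
        · exact hkb
        · exact hpos k t
        · positivity
      refine step1.trans_eq ?_
      have e1 : (ε * Real.exp (-α * t)) ^ (1 - θ)
          = ε ^ (1 - θ) * Real.exp (-α * t * (1 - θ)) := by
        rw [Real.mul_rpow hε.le (Real.exp_pos _).le, ← Real.exp_mul]
      have e2 : (ε * Real.exp (β * t)) ^ θ = ε ^ θ * Real.exp (β * t * θ) := by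
        rw [Real.mul_rpow hε.le (Real.exp_pos _).le, ← Real.exp_mul]
      have e3 : ε ^ (1 - θ) * ε ^ θ = ε := by
        rw [← Real.rpow_add hε]; norm_num
      have e4 : Real.exp (α * t) * Real.exp (-α * t * (1 - θ)) * Real.exp (β * t * θ)
          * Real.exp (-α * t) = Real.exp (c * t) := by
        rw [← Real.exp_add, ← Real.exp_add, ← Real.exp_add]
        congr 1
        rw [hcdef]; ring
      calc Real.exp (α * t) * (C * (ε * Real.exp (-α * t)) ^ (1 - θ)
            * (ε * Real.exp (β * t)) ^ θ) * (ε * Real.exp (-α * t))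
          = C * (ε ^ (1 - θ) * ε ^ θ * ε) * (Real.exp (α * t)
            * Real.exp (-α * t * (1 - θ)) * Real.exp (β * t * θ)
            * Real.exp (-α * t)) := by rw [e1, e2]; ring
        _ = C * ε ^ 2 * Real.exp (c * t) := by rw [e3, e4]; ring
    have hf_int : IntervalIntegrable
        (fun t => Real.exp (α * t) * Nrm (k + 2) t * Nrm k t) MeasureTheory.volume 0 T := by
      apply ContinuousOn.intervalIntegrable
      rw [huIcc]
      exact (((Real.continuous_exp.comp (continuous_const.mul continuous_id)).continuousOn.mul
        (hcont (k + 2))).mul (hcont k))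
    have hg_int : IntervalIntegrable
        (fun t => C * ε ^ 2 * Real.exp (c * t)) MeasureTheory.volume 0 T :=
      (Continuous.intervalIntegrable (by continuity) 0 T)
    have hmono := intervalIntegral.integral_mono_on hT hf_int hg_int hle
    refine hmono.trans ?_
    have hcalc : (∫ t in (0:ℝ)..T, C * ε ^ 2 * Real.exp (c * t))
        = C * ε ^ 2 * ((Real.exp (c * T) - 1) / c) := by
      rw [intervalIntegral.integral_const_mul]
      congr 1
      have hsub : (∫ t in (0:ℝ)..T, Real.exp (c * t))
          = c⁻¹ • ∫ t in (c*0:ℝ)..(c*T), Real.exp t :=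
        intervalIntegral.integral_comp_mul_left (fun t => Real.exp t) hc.ne
      rw [hsub, integral_exp]
      simp [smul_eq_mul, div_eq_inv_mul, mul_comm]
    rw [hcalc]
    have hnc : 0 < -c := neg_pos.mpr hc
    have hexp : (Real.exp (c * T) - 1) / c ≤ 1 / (-c) := by
      have heq : (Real.exp (c * T) - 1) / c = (1 - Real.exp (c * T)) / (-c) := by
        rw [div_eq_div_iff hc.ne (neg_ne_zero.mpr hc.ne)]; ring
      rw [heq]
      have h1 : 0 < Real.exp (c * T) := Real.exp_pos _
      gcongr
      linarith
    calc C * ε ^ 2 * ((Real.exp (c * T) - 1) / c) ≤ C * ε ^ 2 * (1 / (-c)) := by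
          apply mul_le_mul_of_nonneg_left hexp; positivity
      _ = C / (-c) * ε ^ 2 := by ring
end

section
/- Let g solve the gauge-modified Einstein equation Ric(g) + Λg − ∇_g* C(g, g₀) = 0, where C(g, g₀) is the gauge constraint one-form and ∇_g* ψ = −(1/2) L_{ψ♯} g is the symmetric gradient. Then the constraint one-form ψ = C(g, g₀) satisfies the hyperbolic equation □_g ψ − Ric(g)(ψ, ·) = 0 (equivalently −2∇_g · Ĝ_g ∇_g* ψ = 0). -/
open scoped BigOperators

set_option linter.unusedSectionVars false
set_option maxHeartbeats 1000000

noncomputable section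

/-- Partial derivative of a function on `ℝⁿ` in the `i`-th coordinate direction. -/
def pd {n : ℕ} {F : Type*} [NormedAddCommGroup F] [NormedSpace ℝ F]
    (i : Fin n) (f : (Fin n → ℝ) → F) (x : Fin n → ℝ) : F :=
  fderiv ℝ f x (Pi.single i 1)

/-- Christoffel symbols `Γ^σ_{μν}` of the metric `g`, with pointwise inverse metric `G`. -/
def Christoffel {n : ℕ} (g G : (Fin n → ℝ) → Fin n → Fin n → ℝ)
    (σ μ ν : Fin n) (x : Fin n → ℝ) : ℝ :=
  (1 / 2) * ∑ α, G x σ α *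
    (pd μ (fun y => g y α ν) x + pd ν (fun y => g y α μ) x - pd α (fun y => g y μ ν) x)

/-- The Ricci tensor of `g` in coordinates. -/
def RicciC {n : ℕ} (g G : (Fin n → ℝ) → Fin n → Fin n → ℝ)
    (μ ν : Fin n) (x : Fin n → ℝ) : ℝ :=
  (∑ α, pd α (fun y => Christoffel g G α μ ν y) x)
    - (∑ α, pd μ (fun y => Christoffel g G α α ν y) x)
    + (∑ α, ∑ β, Christoffel g G α α β x * Christoffel g G β μ ν x)
    - (∑ α, ∑ β, Christoffel g G α μ β x * Christoffel g G β α ν x)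

/-- The gauge constraint one-form
`C(g,g₀)_μ = g_{μχ} g^{νλ}(Γ(g)^χ_{νλ} − Γ(g₀)^χ_{νλ})`. -/
def constraintForm {n : ℕ} (g G g0 G0 : (Fin n → ℝ) → Fin n → Fin n → ℝ)
    (μ : Fin n) (x : Fin n → ℝ) : ℝ :=
  ∑ χ, g x μ χ * ∑ ν, ∑ lam, G x ν lam *
    (Christoffel g G χ ν lam x - Christoffel g0 G0 χ ν lam x)

/-- Covariant derivative `∇_μ ω_ν` of a one-form `ω`. -/
def covD1 {n : ℕ} (g G : (Fin n → ℝ) → Fin n → Fin n → ℝ)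
    (ω : Fin n → (Fin n → ℝ) → ℝ) (μ ν : Fin n) (x : Fin n → ℝ) : ℝ :=
  pd μ (ω ν) x - ∑ σ, Christoffel g G σ μ ν x * ω σ x

/-- Symmetric gradient `∇_g* ψ = −(1/2) L_{ψ♯} g`, i.e.
`(∇_g*ψ)_{μν} = −(1/2)(∇_μ ψ_ν + ∇_ν ψ_μ)`. -/
def symGrad {n : ℕ} (g G : (Fin n → ℝ) → Fin n → Fin n → ℝ)
    (ω : Fin n → (Fin n → ℝ) → ℝ) (μ ν : Fin n) (x : Fin n → ℝ) : ℝ :=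
  -(1 / 2) * (covD1 g G ω μ ν x + covD1 g G ω ν μ x)

/-- Trace reversal `Ĝ_g k = k − (1/2)(tr_g k) g` of a symmetric 2-tensor field. -/
def traceRevT {n : ℕ} (g G : (Fin n → ℝ) → Fin n → Fin n → ℝ)
    (k : Fin n → Fin n → (Fin n → ℝ) → ℝ) (μ ν : Fin n) (x : Fin n → ℝ) : ℝ :=
  k μ ν x - (1 / 2) * (∑ α, ∑ β, G x α β * k α β x) * g x μ ν

/-- Covariant divergence `(∇_g · T)_ν = ∇^μ T_{μν}` of a 2-tensor field. -/
def covDiv2 {n : ℕ} (g G : (Fin n → ℝ) → Fin n → Fin n → ℝ)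
    (T : Fin n → Fin n → (Fin n → ℝ) → ℝ) (ν : Fin n) (x : Fin n → ℝ) : ℝ :=
  ∑ μ, ∑ α, G x μ α *
    (pd α (T μ ν) x
      - ∑ σ, Christoffel g G σ α μ x * T σ ν x
      - ∑ σ, Christoffel g G σ α ν x * T μ σ x)


namespace TK

variable {n : ℕ}

abbrev Sm (f : (Fin n → ℝ) → ℝ) : Prop := ContDiff ℝ (⊤ : ℕ∞) f

lemma Sm.pd {f : (Fin n → ℝ) → ℝ} (hf : Sm f) (i : Fin n) : Sm (pd i f) := by
  have : ContDiff ℝ (⊤ : ℕ∞) (fderiv ℝ f) := hf.fderiv_right (by simp)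
  exact this.clm_apply contDiff_const

lemma Sm.diff {f : (Fin n → ℝ) → ℝ} (hf : Sm f) (x : Fin n → ℝ) :
    DifferentiableAt ℝ f x := (hf.differentiable (by simp)).differentiableAt

lemma pd_add {f g : (Fin n → ℝ) → ℝ} (hf : Sm f) (hg : Sm g) (i : Fin n) (x : Fin n → ℝ) :
    pd i (fun y => f y + g y) x = pd i f x + pd i g x := by
  simp [pd, fderiv_fun_add (hf.diff x) (hg.diff x)]

lemma pd_neg {f : (Fin n → ℝ) → ℝ} (i : Fin n) (x : Fin n → ℝ) :
    pd i (fun y => -(f y)) x = -pd i f x := by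
  simp [pd, fderiv_neg]

lemma pd_sub {f g : (Fin n → ℝ) → ℝ} (hf : Sm f) (hg : Sm g) (i : Fin n) (x : Fin n → ℝ) :
    pd i (fun y => f y - g y) x = pd i f x - pd i g x := by
  simp [pd, fderiv_fun_sub (hf.diff x) (hg.diff x)]

lemma pd_const (c : ℝ) (i : Fin n) (x : Fin n → ℝ) :
    pd i (fun _ => c) x = 0 := by simp [pd]

lemma pd_mul {f g : (Fin n → ℝ) → ℝ} (hf : Sm f) (hg : Sm g) (i : Fin n) (x : Fin n → ℝ) :
    pd i (fun y => f y * g y) x = pd i f x * g x + f x * pd i g x := by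
  simp [pd, fderiv_fun_mul (hf.diff x) (hg.diff x)]; ring

lemma pd_const_mul {f : (Fin n → ℝ) → ℝ} (hf : Sm f) (c : ℝ) (i : Fin n) (x : Fin n → ℝ) :
    pd i (fun y => c * f y) x = c * pd i f x := by
  simp [pd, fderiv_const_mul (hf.diff x)]

lemma pd_sum {ι : Type*} (s : Finset ι) {f : ι → (Fin n → ℝ) → ℝ}
    (hf : ∀ j, Sm (f j)) (i : Fin n) (x : Fin n → ℝ) :
    pd i (fun y => ∑ j ∈ s, f j y) x = ∑ j ∈ s, pd i (f j) x := by
  simp [pd, fderiv_fun_sum (fun j _ => (hf j).diff x)]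

lemma Sm.add {f g : (Fin n → ℝ) → ℝ} (hf : Sm f) (hg : Sm g) : Sm (fun y => f y + g y) :=
  ContDiff.add hf hg
lemma Sm.sub {f g : (Fin n → ℝ) → ℝ} (hf : Sm f) (hg : Sm g) : Sm (fun y => f y - g y) :=
  ContDiff.sub hf hg
lemma Sm.mul {f g : (Fin n → ℝ) → ℝ} (hf : Sm f) (hg : Sm g) : Sm (fun y => f y * g y) :=
  ContDiff.mul hf hg
lemma Sm.neg {f : (Fin n → ℝ) → ℝ} (hf : Sm f) : Sm (fun y => -(f y)) := ContDiff.neg hf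
lemma Sm.const (c : ℝ) : Sm (fun _ : Fin n → ℝ => c) := contDiff_const
lemma Sm.constMul {f : (Fin n → ℝ) → ℝ} (hf : Sm f) (c : ℝ) : Sm (fun y => c * f y) :=
  (Sm.const c).mul hf
lemma Sm.sum {ι : Type*} (s : Finset ι) {f : ι → (Fin n → ℝ) → ℝ}
    (hf : ∀ j, Sm (f j)) : Sm (fun y => ∑ j ∈ s, f j y) :=
  ContDiff.sum (fun j _ => hf j)

lemma pd_comm {f : (Fin n → ℝ) → ℝ} (hf : Sm f) (i j : Fin n) (x : Fin n → ℝ) :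
    pd i (pd j f) x = pd j (pd i f) x := by
  have hsym : IsSymmSndFDerivAt ℝ f x := (hf.contDiffAt).isSymmSndFDerivAt (by simp; exact WithTop.coe_le_coe.mpr le_top)
  have hdf : DifferentiableAt ℝ (fderiv ℝ f) x :=
    ((hf.fderiv_right (m := 1) ((WithTop.coe_le_coe.mpr le_top))).differentiable one_ne_zero).differentiableAt
  have key : ∀ v w : Fin n → ℝ,
      fderiv ℝ (fun y => fderiv ℝ f y w) x v = fderiv ℝ (fderiv ℝ f) x v w := by
    intro v w
    have : fderiv ℝ (fun y => (fderiv ℝ f y) w) x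
        = ((fderiv ℝ f x).comp (fderiv ℝ (fun _ => w) x) + (fderiv ℝ (fderiv ℝ f) x).flip w) :=
      fderiv_clm_apply hdf (differentiableAt_const w)
    rw [this]; simp
  show fderiv ℝ (fun y => fderiv ℝ f y (Pi.single j 1)) x (Pi.single i 1)
      = fderiv ℝ (fun y => fderiv ℝ f y (Pi.single i 1)) x (Pi.single j 1)
  rw [key, key]
  exact hsym _ _

/-! ### Setup -/

section Geometry

variable (g G : (Fin n → ℝ) → Fin n → Fin n → ℝ)

/-- Lowered Christoffel symbol `Γ_{βμν}`. -/
def lGam (β μ ν : Fin n) (x : Fin n → ℝ) : ℝ :=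
  (1 / 2) * (pd μ (fun y => g y β ν) x + pd ν (fun y => g y β μ) x
    - pd β (fun y => g y μ ν) x)

variable (hg : ∀ μ ν, Sm fun x => g x μ ν)
variable (hG : ∀ μ ν, Sm fun x => G x μ ν)
variable (hsym : ∀ x μ ν, g x μ ν = g x ν μ)
variable (hinv : ∀ x μ ν, (∑ α, g x μ α * G x α ν) = if μ = ν then (1 : ℝ) else 0)

section
include hg

lemma Sm_lGam (β μ ν : Fin n) : Sm (lGam g β μ ν) :=
  (((((hg β ν).pd μ).add ((hg β μ).pd ν)).sub ((hg μ ν).pd β)).constMul _)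

include hG

lemma Sm_Gamma (σ μ ν : Fin n) : Sm (Christoffel g G σ μ ν) := by
  have : ∀ α : Fin n, Sm (fun x => G x σ α *
      (pd μ (fun y => g y α ν) x + pd ν (fun y => g y α μ) x - pd α (fun y => g y μ ν) x)) :=
    fun α => (hG σ α).mul ((((hg α ν).pd μ).add ((hg α μ).pd ν)).sub ((hg μ ν).pd α))
  exact ((Sm.sum Finset.univ this).constMul _)

end

/-- `Γ^σ_{μν} = ∑_α G^{σα} Γ_{αμν}`. -/
lemma Gamma_eq_G_lGam (σ μ ν : Fin n) (x : Fin n → ℝ) :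
    Christoffel g G σ μ ν x = ∑ α, G x σ α * lGam g α μ ν x := by
  rw [Christoffel, Finset.mul_sum]
  refine Finset.sum_congr rfl fun α _ => ?_
  rw [lGam]; ring

include hsym in
lemma lGam_symm (β μ ν : Fin n) (x : Fin n → ℝ) :
    lGam g β μ ν x = lGam g β ν μ x := by
  have h1 : (fun y => g y μ ν) = (fun y => g y ν μ) := funext fun y => hsym y μ ν
  rw [lGam, lGam, h1]; ring

include hsym in
lemma Gamma_symm (σ μ ν : Fin n) (x : Fin n → ℝ) :
    Christoffel g G σ μ ν x = Christoffel g G σ ν μ x := by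
  rw [Gamma_eq_G_lGam, Gamma_eq_G_lGam]
  exact Finset.sum_congr rfl fun α _ => by rw [lGam_symm g hsym]

include hsym hinv in
lemma G_symm (x : Fin n → ℝ) (μ ν : Fin n) : G x μ ν = G x ν μ := by
  have h2 : ∀ β : Fin n, (if β = ν then (1:ℝ) else 0) = ∑ α, g x β α * G x α ν := by
    intro β; rw [hinv]
  have key : ∑ β, (if β = ν then (1:ℝ) else 0) * G x β μ = G x μ ν := by
    calc ∑ β, (if β = ν then (1:ℝ) else 0) * G x β μ
        = ∑ β, ∑ α, g x β α * G x α ν * G x β μ := by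
          refine Finset.sum_congr rfl fun β _ => ?_
          rw [h2, Finset.sum_mul]
      _ = ∑ α, ∑ β, g x α β * G x β μ * G x α ν := by
          rw [Finset.sum_comm]
          exact Finset.sum_congr rfl fun α _ => Finset.sum_congr rfl fun β _ => by
            rw [hsym x α β]; ring
      _ = ∑ α, (if α = μ then (1:ℝ) else 0) * G x α ν := by
          refine Finset.sum_congr rfl fun α _ => ?_
          rw [← Finset.sum_mul, hinv]
      _ = G x μ ν := by simp [Finset.sum_ite_eq']
  calc G x μ ν = ∑ β, (if β = ν then (1:ℝ) else 0) * G x β μ := key.symm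
    _ = G x ν μ := by simp [Finset.sum_ite_eq']

include hsym hinv in
lemma Gg_delta (x : Fin n → ℝ) (μ ν : Fin n) :
    (∑ α, G x μ α * g x α ν) = if μ = ν then (1 : ℝ) else 0 := by
  have : ∀ α : Fin n, G x μ α * g x α ν = g x ν α * G x α μ := fun α => by
    rw [hsym x α ν, G_symm g G hsym hinv x μ α]; ring
  rw [Finset.sum_congr rfl fun α _ => this α, hinv]
  simp [eq_comm]

include hsym hinv in
/-- `∑_ρ g_{νρ} Γ^ρ_{μλ} = Γ_{νμλ}`. -/
lemma g_Gamma (ν μ lam : Fin n) (x : Fin n → ℝ) :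
    (∑ ρ, g x ν ρ * Christoffel g G ρ μ lam x) = lGam g ν μ lam x := by
  calc (∑ ρ, g x ν ρ * Christoffel g G ρ μ lam x)
      = ∑ ρ, ∑ α, g x ν ρ * G x ρ α * lGam g α μ lam x := by
        refine Finset.sum_congr rfl fun ρ _ => ?_
        rw [Gamma_eq_G_lGam, Finset.mul_sum]
        exact Finset.sum_congr rfl fun α _ => by ring
    _ = ∑ α, (∑ ρ, g x ν ρ * G x ρ α) * lGam g α μ lam x := by
        rw [Finset.sum_comm]
        exact Finset.sum_congr rfl fun α _ => by rw [Finset.sum_mul]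
    _ = lGam g ν μ lam x := by
        rw [Finset.sum_congr rfl fun α (_ : α ∈ Finset.univ) => by rw [hinv x ν α]]
        simp [Finset.sum_ite_eq]

include hsym in
/-- `Γ_{αμρ} + Γ_{ρμα} = ∂_μ g_{αρ}`. -/
lemma lGam_add (α μ ρ : Fin n) (x : Fin n → ℝ) :
    lGam g α μ ρ x + lGam g ρ μ α x = pd μ (fun y => g y α ρ) x := by
  have h1 : (fun y => g y ρ α) = (fun y => g y α ρ) := funext fun y => hsym y ρ α
  have h2 : (fun y => g y μ ρ) = (fun y => g y ρ μ) := funext fun y => hsym y μ ρ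
  have h3 : (fun y => g y μ α) = (fun y => g y α μ) := funext fun y => hsym y μ α
  rw [lGam, lGam, h1, h2, h3]; ring

include hsym hinv in
/-- Metric compatibility: `∂_σ g_{μν} = ∑_ρ (Γ^ρ_{σμ} g_{ρν} + Γ^ρ_{σν} g_{μρ})`. -/
lemma metric_compat (σ μ ν : Fin n) (x : Fin n → ℝ) :
    pd σ (fun y => g y μ ν) x
      = (∑ ρ, Christoffel g G ρ σ μ x * g x ρ ν) + ∑ ρ, Christoffel g G ρ σ ν x * g x μ ρ := by
  have h1 : (∑ ρ, Christoffel g G ρ σ μ x * g x ρ ν) = lGam g ν σ μ x := by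
    rw [← g_Gamma g G hsym hinv ν σ μ x]
    exact Finset.sum_congr rfl fun ρ _ => by rw [hsym x ρ ν]; ring
  have h2 : (∑ ρ, Christoffel g G ρ σ ν x * g x μ ρ) = lGam g μ σ ν x := by
    rw [← g_Gamma g G hsym hinv μ σ ν x]
    exact Finset.sum_congr rfl fun ρ _ => by ring
  rw [h1, h2,
    show (fun y => g y μ ν) = fun y => g y ν μ from funext fun y => hsym y μ ν,
    ← lGam_add g hsym ν σ μ x]

include hg hG hsym hinv in
/-- `∂_σ G^{μν} = −∑_{κλ} G^{μκ} (∂_σ g_{κλ}) G^{λν}`. -/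
lemma pd_G_raw (σ μ ν : Fin n) (x : Fin n → ℝ) :
    pd σ (fun y => G y μ ν) x
      = -∑ κ, ∑ lam, G x μ κ * pd σ (fun y => g y κ lam) x * G x lam ν := by
  -- differentiate `∑_α g_{τα} G^{αν} = δ_{τν}`
  have hzero : ∀ τ : Fin n, pd σ (fun y => ∑ α, g y τ α * G y α ν) x = 0 := by
    intro τ
    have : (fun y => ∑ α, g y τ α * G y α ν) = fun _ => if τ = ν then (1:ℝ) else 0 :=
      funext fun y => hinv y τ ν
    rw [this, pd_const]
  have hexp : ∀ τ : Fin n,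
      (∑ α, (pd σ (fun y => g y τ α) x * G x α ν + g x τ α * pd σ (fun y => G y α ν) x)) = 0 := by
    intro τ
    rw [← hzero τ, pd_sum Finset.univ (fun α => (hg τ α).mul (hG α ν)) σ x]
    exact Finset.sum_congr rfl fun α _ => (pd_mul (hg τ α) (hG α ν) σ x).symm
  -- multiply by `G^{μτ}` and sum over `τ`
  have hmul : (∑ τ, G x μ τ * ∑ α, (pd σ (fun y => g y τ α) x * G x α ν
      + g x τ α * pd σ (fun y => G y α ν) x)) = 0 := by
    rw [Finset.sum_congr rfl fun τ (_ : τ ∈ Finset.univ) => by rw [hexp τ, mul_zero]]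
    simp
  have hsplit : (∑ τ, ∑ α, G x μ τ * pd σ (fun y => g y τ α) x * G x α ν)
      + (∑ α, (∑ τ, G x μ τ * g x τ α) * pd σ (fun y => G y α ν) x) = 0 := by
    rw [← hmul]
    calc (∑ τ, ∑ α, G x μ τ * pd σ (fun y => g y τ α) x * G x α ν)
        + (∑ α, (∑ τ, G x μ τ * g x τ α) * pd σ (fun y => G y α ν) x)
        = (∑ τ, ∑ α, G x μ τ * pd σ (fun y => g y τ α) x * G x α ν)
          + (∑ τ, ∑ α, G x μ τ * g x τ α * pd σ (fun y => G y α ν) x) := by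
          congr 1
          rw [Finset.sum_comm]
          exact Finset.sum_congr rfl fun τ _ => by rw [Finset.sum_mul]
      _ = ∑ τ, ∑ α, (G x μ τ * pd σ (fun y => g y τ α) x * G x α ν
          + G x μ τ * g x τ α * pd σ (fun y => G y α ν) x) := by
          rw [← Finset.sum_add_distrib]
          exact Finset.sum_congr rfl fun τ _ => by rw [← Finset.sum_add_distrib]
      _ = ∑ τ, G x μ τ * ∑ α, (pd σ (fun y => g y τ α) x * G x α ν
          + g x τ α * pd σ (fun y => G y α ν) x) := by
          refine Finset.sum_congr rfl fun τ _ => ?_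
          rw [Finset.mul_sum]
          exact Finset.sum_congr rfl fun α _ => by ring
  have hdelta : (∑ α, (∑ τ, G x μ τ * g x τ α) * pd σ (fun y => G y α ν) x)
      = pd σ (fun y => G y μ ν) x := by
    rw [Finset.sum_congr rfl fun α (_ : α ∈ Finset.univ) =>
      by rw [Gg_delta g G hsym hinv x μ α]]
    simp [Finset.sum_ite_eq]
  rw [← hdelta]
  have := hsplit
  linarith [hsplit]

include hg hG hsym hinv in
/-- `∇_σ G = 0` in the form
`∂_σ G^{μν} = −∑_ρ (Γ^μ_{σρ} G^{ρν} + Γ^ν_{σρ} G^{μρ})`. -/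
lemma pd_G (σ μ ν : Fin n) (x : Fin n → ℝ) :
    pd σ (fun y => G y μ ν) x
      = -∑ ρ, (Christoffel g G μ σ ρ x * G x ρ ν + Christoffel g G ν σ ρ x * G x μ ρ) := by
  rw [pd_G_raw g G hg hG hsym hinv σ μ ν x, neg_inj]
  calc (∑ κ, ∑ lam, G x μ κ * pd σ (fun y => g y κ lam) x * G x lam ν)
      = ∑ κ, ∑ lam, (G x μ κ * lGam g κ σ lam x * G x lam ν
          + G x μ κ * lGam g lam σ κ x * G x lam ν) := by
        refine Finset.sum_congr rfl fun κ _ => Finset.sum_congr rfl fun lam _ => ?_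
        rw [← lGam_add g hsym κ σ lam x]; ring
    _ = (∑ κ, ∑ lam, G x μ κ * lGam g κ σ lam x * G x lam ν)
          + ∑ κ, ∑ lam, G x μ κ * lGam g lam σ κ x * G x lam ν := by
        rw [← Finset.sum_add_distrib]
        exact Finset.sum_congr rfl fun κ _ => by rw [← Finset.sum_add_distrib]
    _ = (∑ lam, (∑ κ, G x μ κ * lGam g κ σ lam x) * G x lam ν)
          + ∑ κ, G x μ κ * (∑ lam, G x ν lam * lGam g lam σ κ x) := by
        congr 1
        · rw [Finset.sum_comm]
          exact Finset.sum_congr rfl fun lam _ => by rw [Finset.sum_mul]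
        · refine Finset.sum_congr rfl fun κ _ => ?_
          rw [Finset.mul_sum]
          refine Finset.sum_congr rfl fun lam _ => ?_
          rw [G_symm g G hsym hinv x ν lam]; ring
    _ = ∑ ρ, (Christoffel g G μ σ ρ x * G x ρ ν + Christoffel g G ν σ ρ x * G x μ ρ) := by
        rw [Finset.sum_add_distrib]
        congr 1
        · exact Finset.sum_congr rfl fun ρ _ => by
            rw [← Gamma_eq_G_lGam g G μ σ ρ x]
        · exact Finset.sum_congr rfl fun ρ _ => by
            rw [← Gamma_eq_G_lGam g G ν σ ρ x]; ring

/-- Riemann curvature `R^ρ_{σμν}`. -/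
def Riem (ρ σ μ ν : Fin n) (x : Fin n → ℝ) : ℝ :=
  pd μ (Christoffel g G ρ ν σ) x - pd ν (Christoffel g G ρ μ σ) x
    + ∑ β, (Christoffel g G ρ μ β x * Christoffel g G β ν σ x
        - Christoffel g G ρ ν β x * Christoffel g G β μ σ x)

/-- Lowered Riemann curvature `R_{ασμν}`. -/
def lRiem (α σ μ ν : Fin n) (x : Fin n → ℝ) : ℝ :=
  pd μ (lGam g α ν σ) x - pd ν (lGam g α μ σ) x
    - (∑ ρ, lGam g ρ μ α x * Christoffel g G ρ ν σ x)
    + ∑ ρ, lGam g ρ ν α x * Christoffel g G ρ μ σ x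

include hg hG in
lemma Sm_Riem (ρ σ μ ν : Fin n) : Sm (Riem g G ρ σ μ ν) := by
  have hΓ : ∀ a b c : Fin n, Sm (Christoffel g G a b c) := fun a b c => Sm_Gamma g G hg hG a b c
  exact ((((hΓ ρ ν σ).pd μ).sub ((hΓ ρ μ σ).pd ν)).add
    (Sm.sum Finset.univ fun β => ((hΓ ρ μ β).mul (hΓ β ν σ)).sub ((hΓ ρ ν β).mul (hΓ β μ σ))))

lemma Ricci_eq_trace_Riem (μ ν : Fin n) (x : Fin n → ℝ) :
    RicciC g G μ ν x = ∑ α, Riem g G α ν α μ x := by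
  rw [RicciC]
  simp only [Riem, Finset.sum_add_distrib, Finset.sum_sub_distrib]
  ring

lemma Riem_antisym (ρ σ μ ν : Fin n) (x : Fin n → ℝ) :
    Riem g G ρ σ μ ν x = -Riem g G ρ σ ν μ x := by
  simp only [Riem, Finset.sum_sub_distrib]; ring

include hg hG hsym hinv in
/-- `∑_ρ g_{αρ} R^ρ_{σμν} = R_{ασμν}`. -/
lemma g_Riem (α σ μ ν : Fin n) (x : Fin n → ℝ) :
    (∑ ρ, g x α ρ * Riem g G ρ σ μ ν x) = lRiem g G α σ μ ν x := by
  have hΓ : ∀ a b c : Fin n, Sm (Christoffel g G a b c) := fun a b c => Sm_Gamma g G hg hG a b c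
  -- derivative terms
  have hder : ∀ μ' ν' : Fin n,
      (∑ ρ, g x α ρ * pd μ' (Christoffel g G ρ ν' σ) x)
        = pd μ' (lGam g α ν' σ) x
          - (∑ ρ, lGam g α μ' ρ x * Christoffel g G ρ ν' σ x)
          - ∑ ρ, lGam g ρ μ' α x * Christoffel g G ρ ν' σ x := by
    intro μ' ν'
    have h0 : (lGam g α ν' σ) = fun y => ∑ ρ, g y α ρ * Christoffel g G ρ ν' σ y :=
      funext fun y => (g_Gamma g G hsym hinv α ν' σ y).symm
    have h1 : pd μ' (lGam g α ν' σ) x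
        = ∑ ρ, (pd μ' (fun y => g y α ρ) x * Christoffel g G ρ ν' σ x
            + g x α ρ * pd μ' (Christoffel g G ρ ν' σ) x) := by
      rw [h0, pd_sum Finset.univ (fun ρ => (hg α ρ).mul (hΓ ρ ν' σ)) μ' x]
      exact Finset.sum_congr rfl fun ρ _ => pd_mul (hg α ρ) (hΓ ρ ν' σ) μ' x
    have h2 : ∀ ρ : Fin n, pd μ' (fun y => g y α ρ) x = lGam g α μ' ρ x + lGam g ρ μ' α x :=
      fun ρ => (lGam_add g hsym α μ' ρ x).symm
    have h3 : pd μ' (lGam g α ν' σ) x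
        = ∑ ρ, (lGam g α μ' ρ x * Christoffel g G ρ ν' σ x
            + lGam g ρ μ' α x * Christoffel g G ρ ν' σ x
            + g x α ρ * pd μ' (Christoffel g G ρ ν' σ) x) := by
      rw [h1]
      refine Finset.sum_congr rfl fun ρ _ => ?_
      rw [h2 ρ]; ring
    rw [h3]
    simp only [Finset.sum_add_distrib]
    ring
  -- quadratic terms
  have hq : ∀ μ' ν' : Fin n,
      (∑ ρ, ∑ β, g x α ρ * (Christoffel g G ρ μ' β x * Christoffel g G β ν' σ x))
        = ∑ β, lGam g α μ' β x * Christoffel g G β ν' σ x := by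
    intro μ' ν'
    rw [Finset.sum_comm]
    refine Finset.sum_congr rfl fun β _ => ?_
    rw [← g_Gamma g G hsym hinv α μ' β x, Finset.sum_mul]
    exact Finset.sum_congr rfl fun ρ _ => by ring
  calc (∑ ρ, g x α ρ * Riem g G ρ σ μ ν x)
      = (∑ ρ, g x α ρ * pd μ (Christoffel g G ρ ν σ) x)
        - (∑ ρ, g x α ρ * pd ν (Christoffel g G ρ μ σ) x)
        + ((∑ ρ, ∑ β, g x α ρ * (Christoffel g G ρ μ β x * Christoffel g G β ν σ x))
          - ∑ ρ, ∑ β, g x α ρ * (Christoffel g G ρ ν β x * Christoffel g G β μ σ x)) := by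
        simp only [Riem, Finset.mul_sum, mul_sub, mul_add, Finset.sum_add_distrib,
          Finset.sum_sub_distrib]
    _ = lRiem g G α σ μ ν x := by
        rw [hder μ ν, hder ν μ, hq μ ν, hq ν μ, lRiem]
        ring

include hg hG hsym hinv in
/-- `R^ρ_{σμν} = ∑_α G^{ρα} R_{ασμν}`. -/
lemma Riem_eq_G_lRiem (ρ σ μ ν : Fin n) (x : Fin n → ℝ) :
    Riem g G ρ σ μ ν x = ∑ α, G x ρ α * lRiem g G α σ μ ν x := by
  calc Riem g G ρ σ μ ν x
      = ∑ τ, (if ρ = τ then (1:ℝ) else 0) * Riem g G τ σ μ ν x := by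
        simp [Finset.sum_ite_eq]
    _ = ∑ τ, (∑ α, G x ρ α * g x α τ) * Riem g G τ σ μ ν x := by
        refine Finset.sum_congr rfl fun τ _ => ?_
        rw [Gg_delta g G hsym hinv x ρ τ]
    _ = ∑ τ, ∑ α, G x ρ α * g x α τ * Riem g G τ σ μ ν x := by
        exact Finset.sum_congr rfl fun τ _ => by rw [Finset.sum_mul]
    _ = ∑ α, ∑ τ, G x ρ α * g x α τ * Riem g G τ σ μ ν x := Finset.sum_comm
    _ = ∑ α, G x ρ α * ∑ τ, g x α τ * Riem g G τ σ μ ν x := by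
        refine Finset.sum_congr rfl fun α _ => ?_
        rw [Finset.mul_sum]
        exact Finset.sum_congr rfl fun τ _ => by ring
    _ = ∑ α, G x ρ α * lRiem g G α σ μ ν x := by
        refine Finset.sum_congr rfl fun α _ => ?_
        rw [g_Riem g G hg hG hsym hinv α σ μ ν x]

include hg hG hsym hinv in
/-- First-pair antisymmetry of the lowered Riemann tensor. -/
lemma lRiem_antisym (α σ μ ν : Fin n) (x : Fin n → ℝ) :
    lRiem g G α σ μ ν x + lRiem g G σ α μ ν x = 0 := by
  -- derivative parts combine to second derivatives of g
  have hpd : ∀ μ' ν' : Fin n,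
      pd μ' (lGam g α ν' σ) x + pd μ' (lGam g σ ν' α) x
        = pd μ' (pd ν' (fun y => g y α σ)) x := by
    intro μ' ν'
    have h0 : (pd ν' (fun y => g y α σ))
        = fun y => lGam g α ν' σ y + lGam g σ ν' α y :=
      funext fun y => (lGam_add g hsym α ν' σ y).symm
    rw [h0, pd_add (Sm_lGam g hg α ν' σ) (Sm_lGam g hg σ ν' α)]
  -- quadratic parts pair up
  have hqq : ∀ a b c d : Fin n,
      (∑ ρ, lGam g ρ a b x * Christoffel g G ρ c d x)
        = ∑ ρ, lGam g ρ c d x * Christoffel g G ρ a b x := by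
    intro a b c d
    have e1 : ∀ p q r : Fin n, Christoffel g G p q r x = ∑ β, G x p β * lGam g β q r x :=
      fun p q r => Gamma_eq_G_lGam g G p q r x
    calc (∑ ρ, lGam g ρ a b x * Christoffel g G ρ c d x)
        = ∑ ρ, ∑ β, lGam g ρ a b x * G x ρ β * lGam g β c d x := by
          refine Finset.sum_congr rfl fun ρ _ => ?_
          rw [e1 ρ c d, Finset.mul_sum]
          exact Finset.sum_congr rfl fun β _ => by ring
      _ = ∑ β, ∑ ρ, lGam g β c d x * G x β ρ * lGam g ρ a b x := by
          rw [Finset.sum_comm]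
          refine Finset.sum_congr rfl fun β _ => Finset.sum_congr rfl fun ρ _ => ?_
          rw [G_symm g G hsym hinv x ρ β]; ring
      _ = ∑ β, lGam g β c d x * Christoffel g G β a b x := by
          refine Finset.sum_congr rfl fun β _ => ?_
          rw [e1 β a b, Finset.mul_sum]
          exact Finset.sum_congr rfl fun ρ _ => by ring
  have e2 := hpd μ ν
  have e3 := hpd ν μ
  have e4 : pd μ (pd ν (fun y => g y α σ)) x = pd ν (pd μ (fun y => g y α σ)) x :=
    pd_comm (hg α σ) μ ν x
  have e5 := hqq μ α ν σ
  have e6 := hqq ν α μ σ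
  simp only [lRiem]
  linarith [e2, e3, e4, e5, e6]

lemma sum_swap4 (F : Fin n → Fin n → Fin n → Fin n → ℝ) :
    (∑ α, ∑ β, ∑ κ, ∑ lam, F α β κ lam) = ∑ κ, ∑ lam, ∑ α, ∑ β, F α β κ lam := by
  calc (∑ α, ∑ β, ∑ κ, ∑ lam, F α β κ lam)
      = ∑ α, ∑ κ, ∑ β, ∑ lam, F α β κ lam :=
        Finset.sum_congr rfl fun α _ => Finset.sum_comm
    _ = ∑ κ, ∑ α, ∑ β, ∑ lam, F α β κ lam := Finset.sum_comm
    _ = ∑ κ, ∑ α, ∑ lam, ∑ β, F α β κ lam :=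
        Finset.sum_congr rfl fun κ _ => Finset.sum_congr rfl fun α _ => Finset.sum_comm
    _ = ∑ κ, ∑ lam, ∑ α, ∑ β, F α β κ lam :=
        Finset.sum_congr rfl fun κ _ => Finset.sum_comm

include hg hG hsym hinv in
/-- `∑_{σν'} G^{σν'} R^ρ_{σμν'} = ∑_α G^{ρα} Ric_{μα}`. -/
lemma GG_Riem (ρ μ : Fin n) (x : Fin n → ℝ) :
    (∑ σ, ∑ ν', G x σ ν' * Riem g G ρ σ μ ν' x)
      = ∑ α, G x ρ α * RicciC g G μ α x := by
  have inner : ∀ α : Fin n,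
      (∑ σ, ∑ ν', G x σ ν' * lRiem g G α σ μ ν' x) = RicciC g G μ α x := by
    intro α
    calc (∑ σ, ∑ ν', G x σ ν' * lRiem g G α σ μ ν' x)
        = ∑ ν', ∑ σ, G x σ ν' * lRiem g G α σ μ ν' x := Finset.sum_comm
      _ = ∑ ν', -(∑ σ, G x ν' σ * lRiem g G σ α μ ν' x) := by
          refine Finset.sum_congr rfl fun ν' _ => ?_
          rw [← Finset.sum_neg_distrib]
          refine Finset.sum_congr rfl fun σ _ => ?_
          rw [G_symm g G hsym hinv x σ ν',
            eq_neg_of_add_eq_zero_left (lRiem_antisym g G hg hG hsym hinv α σ μ ν' x)]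
          ring
      _ = ∑ ν', -Riem g G ν' α μ ν' x := by
          refine Finset.sum_congr rfl fun ν' _ => ?_
          rw [← Riem_eq_G_lRiem g G hg hG hsym hinv ν' α μ ν' x]
      _ = ∑ ν', Riem g G ν' α ν' μ x := by
          refine Finset.sum_congr rfl fun ν' _ => ?_
          rw [Riem_antisym g G ν' α ν' μ x]
      _ = RicciC g G μ α x := (Ricci_eq_trace_Riem g G μ α x).symm
  calc (∑ σ, ∑ ν', G x σ ν' * Riem g G ρ σ μ ν' x)
      = ∑ σ, ∑ ν', ∑ α, G x ρ α * (G x σ ν' * lRiem g G α σ μ ν' x) := by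
        refine Finset.sum_congr rfl fun σ _ => Finset.sum_congr rfl fun ν' _ => ?_
        rw [Riem_eq_G_lRiem g G hg hG hsym hinv ρ σ μ ν' x, Finset.mul_sum]
        exact Finset.sum_congr rfl fun α _ => by ring
    _ = ∑ α, ∑ σ, ∑ ν', G x ρ α * (G x σ ν' * lRiem g G α σ μ ν' x) := by
        calc (∑ σ, ∑ ν', ∑ α, G x ρ α * (G x σ ν' * lRiem g G α σ μ ν' x))
            = ∑ σ, ∑ α, ∑ ν', G x ρ α * (G x σ ν' * lRiem g G α σ μ ν' x) :=
              Finset.sum_congr rfl fun σ _ => Finset.sum_comm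
          _ = ∑ α, ∑ σ, ∑ ν', G x ρ α * (G x σ ν' * lRiem g G α σ μ ν' x) :=
              Finset.sum_comm
    _ = ∑ α, G x ρ α * RicciC g G μ α x := by
        refine Finset.sum_congr rfl fun α _ => ?_
        rw [← inner α, Finset.mul_sum]
        exact Finset.sum_congr rfl fun σ _ => by rw [Finset.mul_sum]

include hg hG hsym hinv in
/-- Trace of Christoffel: `Γ^α_{αν} = ½ ∑_{αβ} G^{αβ} ∂_ν g_{αβ}`. -/
lemma Gamma_trace (ν : Fin n) (x : Fin n → ℝ) :
    (∑ α, Christoffel g G α α ν x)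
      = (1/2) * ∑ α, ∑ β, G x α β * pd ν (fun y => g y α β) x := by
  have expand : (∑ α, Christoffel g G α α ν x)
      = (1/2) * ((∑ α, ∑ β, G x α β * pd α (fun y => g y β ν) x)
        + (∑ α, ∑ β, G x α β * pd ν (fun y => g y β α) x)
        - ∑ α, ∑ β, G x α β * pd β (fun y => g y α ν) x) := by
    simp only [Christoffel, Finset.mul_sum, mul_add, mul_sub, Finset.sum_add_distrib,
      Finset.sum_sub_distrib]
  have h13 : (∑ α, ∑ β, G x α β * pd α (fun y => g y β ν) x)
      = ∑ α, ∑ β, G x α β * pd β (fun y => g y α ν) x := by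
    rw [Finset.sum_comm]
    exact Finset.sum_congr rfl fun α _ => Finset.sum_congr rfl fun β _ => by
      rw [G_symm g G hsym hinv x β α]
  have h2 : (∑ α, ∑ β, G x α β * pd ν (fun y => g y β α) x)
      = ∑ α, ∑ β, G x α β * pd ν (fun y => g y α β) x := by
    refine Finset.sum_congr rfl fun α _ => Finset.sum_congr rfl fun β _ => ?_
    rw [show (fun y => g y β α) = fun y => g y α β from funext fun y => hsym y β α]
  rw [expand, h13, h2]; ring

include hg hG hsym hinv in
/-- The Ricci tensor is symmetric. -/
lemma Ricci_symm (μ ν : Fin n) (x : Fin n → ℝ) :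
    RicciC g G μ ν x = RicciC g G ν μ x := by
  have hΓ : ∀ a b c : Fin n, Sm (Christoffel g G a b c) := fun a b c => Sm_Gamma g G hg hG a b c
  -- the contracted-Christoffel derivative term is symmetric
  have key : ∀ μ' ν' : Fin n,
      (∑ α, pd μ' (fun y => Christoffel g G α α ν' y) x)
        = (1/2) * ((∑ α, ∑ β, pd μ' (fun y => G y α β) x * pd ν' (fun y => g y α β) x)
          + ∑ α, ∑ β, G x α β * pd μ' (pd ν' (fun y => g y α β)) x) := by
    intro μ' ν'
    have h0 : (fun y => ∑ α, Christoffel g G α α ν' y)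
        = fun y => (1/2) * ∑ α, ∑ β, G y α β * pd ν' (fun y' => g y' α β) y :=
      funext fun y => Gamma_trace g G hg hG hsym hinv ν' y
    have h1 : (∑ α, pd μ' (fun y => Christoffel g G α α ν' y) x)
        = pd μ' (fun y => ∑ α, Christoffel g G α α ν' y) x :=
      (pd_sum Finset.univ (fun α => hΓ α α ν') μ' x).symm
    rw [h1, h0, pd_const_mul (Sm.sum Finset.univ fun α => Sm.sum Finset.univ fun β =>
      (hG α β).mul ((hg α β).pd ν')) (1/2) μ' x,
      pd_sum Finset.univ (fun α => Sm.sum Finset.univ fun β => (hG α β).mul ((hg α β).pd ν')) μ' x]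
    rw [Finset.sum_congr rfl fun α (_ : α ∈ Finset.univ) =>
      pd_sum Finset.univ (fun β => (hG α β).mul ((hg α β).pd ν')) μ' x]
    rw [Finset.sum_congr rfl fun α (_ : α ∈ Finset.univ) =>
      Finset.sum_congr rfl fun β (_ : β ∈ Finset.univ) =>
        pd_mul (hG α β) ((hg α β).pd ν') μ' x]
    simp only [Finset.sum_add_distrib]
  -- first piece of `key` is symmetric in `μ' ν'`
  have expand : ∀ μ'' ν'' : Fin n,
      (∑ α, ∑ β, pd μ'' (fun y => G y α β) x * pd ν'' (fun y => g y α β) x)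
        = -∑ α, ∑ β, ∑ κ, ∑ lam, G x α κ * pd μ'' (fun y => g y κ lam) x * G x lam β
            * pd ν'' (fun y => g y α β) x := by
    intro μ'' ν''
    rw [← Finset.sum_neg_distrib]
    refine Finset.sum_congr rfl fun α _ => ?_
    rw [← Finset.sum_neg_distrib]
    refine Finset.sum_congr rfl fun β _ => ?_
    rw [pd_G_raw g G hg hG hsym hinv μ'' α β x, neg_mul, neg_inj, Finset.sum_mul]
    exact Finset.sum_congr rfl fun κ _ => by rw [Finset.sum_mul]
  have hT1 : (∑ α, ∑ β, pd μ (fun y => G y α β) x * pd ν (fun y => g y α β) x)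
      = ∑ α, ∑ β, pd ν (fun y => G y α β) x * pd μ (fun y => g y α β) x := by
    rw [expand μ ν, expand ν μ, neg_inj]
    rw [sum_swap4 (fun α β κ lam => G x α κ * pd μ (fun y => g y κ lam) x * G x lam β
      * pd ν (fun y => g y α β) x)]
    refine Finset.sum_congr rfl fun a _ => Finset.sum_congr rfl fun b _ =>
      Finset.sum_congr rfl fun c _ => Finset.sum_congr rfl fun d _ => ?_
    rw [G_symm g G hsym hinv x c a, G_symm g G hsym hinv x b d]
    ring
  -- second piece symmetric by Clairaut
  have hT2 : (∑ α, ∑ β, G x α β * pd μ (pd ν (fun y => g y α β)) x)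
      = ∑ α, ∑ β, G x α β * pd ν (pd μ (fun y => g y α β)) x :=
    Finset.sum_congr rfl fun α _ => Finset.sum_congr rfl fun β _ => by
      rw [pd_comm (hg α β) μ ν x]
  have ht2 : (∑ α, pd μ (fun y => Christoffel g G α α ν y) x)
      = ∑ α, pd ν (fun y => Christoffel g G α α μ y) x := by
    rw [key μ ν, key ν μ, hT1, hT2]
  -- remaining terms
  have ht1 : (∑ α, pd α (fun y => Christoffel g G α μ ν y) x)
      = ∑ α, pd α (fun y => Christoffel g G α ν μ y) x :=
    Finset.sum_congr rfl fun α _ => by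
      rw [show (fun y => Christoffel g G α μ ν y) = fun y => Christoffel g G α ν μ y from
        funext fun y => Gamma_symm g G hsym α μ ν y]
  have ht3 : (∑ α, ∑ β, Christoffel g G α α β x * Christoffel g G β μ ν x)
      = ∑ α, ∑ β, Christoffel g G α α β x * Christoffel g G β ν μ x :=
    Finset.sum_congr rfl fun α _ => Finset.sum_congr rfl fun β _ => by
      rw [Gamma_symm g G hsym β μ ν x]
  have ht4 : (∑ α, ∑ β, Christoffel g G α μ β x * Christoffel g G β α ν x)
      = ∑ α, ∑ β, Christoffel g G α ν β x * Christoffel g G β α μ x := by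
    rw [Finset.sum_comm]
    refine Finset.sum_congr rfl fun α _ => Finset.sum_congr rfl fun β _ => ?_
    rw [Gamma_symm g G hsym β μ α x, Gamma_symm g G hsym α ν β x]
    ring
  rw [RicciC, RicciC, ht1, ht2, ht3, ht4]

/-! ### Matrix formulation for the second Bianchi identity -/

/-- Entrywise partial derivative of a matrix-valued function. -/
def pdM (i : Fin n) (A : (Fin n → ℝ) → Matrix (Fin n) (Fin n) ℝ) (x : Fin n → ℝ) :
    Matrix (Fin n) (Fin n) ℝ :=
  Matrix.of fun ρ σ => pd i (fun y => A y ρ σ) x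

/-- Matrix of Christoffel symbols `(Γ_μ)^ρ_σ = Γ^ρ_{μσ}`. -/
def Gmat (μ : Fin n) (x : Fin n → ℝ) : Matrix (Fin n) (Fin n) ℝ :=
  Matrix.of fun ρ σ => Christoffel g G ρ μ σ x

/-- Curvature matrix `F_{μν} = ∂_μ Γ_ν − ∂_ν Γ_μ + [Γ_μ, Γ_ν]`. -/
def Fmat (μ ν : Fin n) (x : Fin n → ℝ) : Matrix (Fin n) (Fin n) ℝ :=
  pdM μ (Gmat g G ν) x - pdM ν (Gmat g G μ) x
    + (Gmat g G μ x * Gmat g G ν x - Gmat g G ν x * Gmat g G μ x)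

abbrev SmM (A : (Fin n → ℝ) → Matrix (Fin n) (Fin n) ℝ) : Prop :=
  ∀ ρ σ, Sm (fun y => A y ρ σ)

lemma pdM_apply (i : Fin n) (A : (Fin n → ℝ) → Matrix (Fin n) (Fin n) ℝ)
    (x : Fin n → ℝ) (ρ σ : Fin n) :
    pdM i A x ρ σ = pd i (fun y => A y ρ σ) x := rfl

lemma SmM.pdM {A : (Fin n → ℝ) → Matrix (Fin n) (Fin n) ℝ} (hA : SmM A) (i : Fin n) :
    SmM (fun y => pdM i A y) := fun ρ σ => (hA ρ σ).pd i

lemma SmM.matmul {A B : (Fin n → ℝ) → Matrix (Fin n) (Fin n) ℝ} (hA : SmM A) (hB : SmM B) :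
    SmM (fun y => A y * B y) := by
  intro ρ σ
  have : (fun y => (A y * B y) ρ σ) = fun y => ∑ κ, A y ρ κ * B y κ σ :=
    funext fun y => Matrix.mul_apply
  rw [this]
  exact Sm.sum Finset.univ fun κ => (hA ρ κ).mul (hB κ σ)

lemma SmM.matsub {A B : (Fin n → ℝ) → Matrix (Fin n) (Fin n) ℝ} (hA : SmM A) (hB : SmM B) :
    SmM (fun y => A y - B y) := fun ρ σ => (hA ρ σ).sub (hB ρ σ)

lemma pdM_add {A B : (Fin n → ℝ) → Matrix (Fin n) (Fin n) ℝ} (hA : SmM A) (hB : SmM B)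
    (i : Fin n) (x : Fin n → ℝ) :
    pdM i (fun y => A y + B y) x = pdM i A x + pdM i B x := by
  ext ρ σ
  simp only [pdM, Matrix.of_apply, Matrix.add_apply]
  exact pd_add (hA ρ σ) (hB ρ σ) i x

lemma pdM_sub {A B : (Fin n → ℝ) → Matrix (Fin n) (Fin n) ℝ} (hA : SmM A) (hB : SmM B)
    (i : Fin n) (x : Fin n → ℝ) :
    pdM i (fun y => A y - B y) x = pdM i A x - pdM i B x := by
  ext ρ σ
  simp only [pdM, Matrix.of_apply, Matrix.sub_apply]
  exact pd_sub (hA ρ σ) (hB ρ σ) i x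

lemma pdM_mul {A B : (Fin n → ℝ) → Matrix (Fin n) (Fin n) ℝ} (hA : SmM A) (hB : SmM B)
    (i : Fin n) (x : Fin n → ℝ) :
    pdM i (fun y => A y * B y) x = pdM i A x * B x + A x * pdM i B x := by
  ext ρ σ
  simp only [pdM, Matrix.of_apply, Matrix.add_apply, Matrix.mul_apply]
  rw [pd_sum Finset.univ (fun κ => (hA ρ κ).mul (hB κ σ)) i x]
  rw [Finset.sum_congr rfl fun κ (_ : κ ∈ Finset.univ) => pd_mul (hA ρ κ) (hB κ σ) i x]
  rw [Finset.sum_add_distrib]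

lemma pdM_comm {A : (Fin n → ℝ) → Matrix (Fin n) (Fin n) ℝ} (hA : SmM A)
    (i j : Fin n) (x : Fin n → ℝ) :
    pdM i (fun y => pdM j A y) x = pdM j (fun y => pdM i A y) x := by
  ext ρ σ
  simp only [pdM, Matrix.of_apply]
  exact pd_comm (hA ρ σ) i j x

include hg hG in
lemma SmM_Gmat (μ : Fin n) : SmM (Gmat g G μ) := fun ρ σ => Sm_Gamma g G hg hG ρ μ σ

lemma Fmat_apply (μ ν ρ σ : Fin n) (x : Fin n → ℝ) :
    Fmat g G μ ν x ρ σ = Riem g G ρ σ μ ν x := by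
  simp only [Fmat, Riem, Matrix.add_apply, Matrix.sub_apply, Matrix.mul_apply,
    pdM, Gmat, Matrix.of_apply, Finset.sum_sub_distrib]

include hg hG in
/-- Matrix form of the second Bianchi identity. -/
lemma mat_bianchi (lam μ ν : Fin n) (x : Fin n → ℝ) :
    (pdM lam (Fmat g G μ ν) x + (Gmat g G lam x * Fmat g G μ ν x - Fmat g G μ ν x * Gmat g G lam x))
    + (pdM μ (Fmat g G ν lam) x + (Gmat g G μ x * Fmat g G ν lam x - Fmat g G ν lam x * Gmat g G μ x))
    + (pdM ν (Fmat g G lam μ) x + (Gmat g G ν x * Fmat g G lam μ x - Fmat g G lam μ x * Gmat g G ν x))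
    = 0 := by
  have hGm : ∀ a : Fin n, SmM (Gmat g G a) := SmM_Gmat g G hg hG
  have hpdGm : ∀ a b : Fin n, SmM (fun y => pdM a (Gmat g G b) y) := fun a b =>
    (hGm b).pdM a
  have expand : ∀ a b c : Fin n,
      pdM a (Fmat g G b c) x
        = pdM a (fun y => pdM b (Gmat g G c) y) x - pdM a (fun y => pdM c (Gmat g G b) y) x
          + (pdM a (Gmat g G b) x * Gmat g G c x + Gmat g G b x * pdM a (Gmat g G c) x
            - (pdM a (Gmat g G c) x * Gmat g G b x + Gmat g G c x * pdM a (Gmat g G b) x)) := by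
    intro a b c
    have h0 : Fmat g G b c = fun y => (pdM b (Gmat g G c) y - pdM c (Gmat g G b) y)
        + (Gmat g G b y * Gmat g G c y - Gmat g G c y * Gmat g G b y) := rfl
    rw [h0, pdM_add ((hpdGm b c).matsub (hpdGm c b))
      (((hGm b).matmul (hGm c)).matsub ((hGm c).matmul (hGm b))),
      pdM_sub (hpdGm b c) (hpdGm c b),
      pdM_sub ((hGm b).matmul (hGm c)) ((hGm c).matmul (hGm b)),
      pdM_mul (hGm b) (hGm c), pdM_mul (hGm c) (hGm b)]
    try abel
  rw [expand lam μ ν, expand μ ν lam, expand ν lam μ,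
    pdM_comm (hGm ν) lam μ x, pdM_comm (hGm lam) μ ν x, pdM_comm (hGm μ) ν lam x]
  simp only [Fmat]
  try noncomm_ring

/-- Covariant derivative of the Riemann tensor `∇_λ R^ρ_{σμν}`. -/
def CovDRiem (lam ρ σ μ ν : Fin n) (x : Fin n → ℝ) : ℝ :=
  pd lam (Riem g G ρ σ μ ν) x
    + (∑ κ, Christoffel g G ρ lam κ x * Riem g G κ σ μ ν x)
    - (∑ κ, Christoffel g G κ lam σ x * Riem g G ρ κ μ ν x)
    - (∑ κ, Christoffel g G κ lam μ x * Riem g G ρ σ κ ν x)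
    - (∑ κ, Christoffel g G κ lam ν x * Riem g G ρ σ μ κ x)

include hg hG hsym in
/-- Second Bianchi identity, componentwise. -/
lemma bianchi (lam μ ν ρ σ : Fin n) (x : Fin n → ℝ) :
    CovDRiem g G lam ρ σ μ ν x + CovDRiem g G μ ρ σ ν lam x
      + CovDRiem g G ν ρ σ lam μ x = 0 := by
  have hmat := congrArg (fun M : Matrix (Fin n) (Fin n) ℝ => M ρ σ)
    (mat_bianchi g G hg hG lam μ ν x)
  simp only [Matrix.add_apply, Matrix.sub_apply, Matrix.mul_apply, Matrix.zero_apply] at hmat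
  -- convert matrix entries to `Riem`/`pd` terms
  have hpdF : ∀ a b c : Fin n, pdM a (Fmat g G b c) x ρ σ = pd a (Riem g G ρ σ b c) x := by
    intro a b c
    rw [pdM_apply]
    congr 1
    exact funext fun y => Fmat_apply g G b c ρ σ y
  have hGF : ∀ a b c : Fin n,
      (∑ κ, Gmat g G a x ρ κ * Fmat g G b c x κ σ)
        = ∑ κ, Christoffel g G ρ a κ x * Riem g G κ σ b c x :=
    fun a b c => Finset.sum_congr rfl fun κ _ => by
      rw [Fmat_apply g G b c κ σ x]; rfl
  have hFG : ∀ a b c : Fin n,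
      (∑ κ, Fmat g G b c x ρ κ * Gmat g G a x κ σ)
        = ∑ κ, Christoffel g G κ a σ x * Riem g G ρ κ b c x :=
    fun a b c => Finset.sum_congr rfl fun κ _ => by
      rw [Fmat_apply g G b c ρ κ x]; show Riem g G ρ κ b c x * Christoffel g G κ a σ x = _; ring
  rw [hpdF lam μ ν, hpdF μ ν lam, hpdF ν lam μ, hGF lam μ ν, hGF μ ν lam, hGF ν lam μ,
    hFG lam μ ν, hFG μ ν lam, hFG ν lam μ] at hmat
  -- the extra lower-index correction terms cancel in the cyclic sum
  have hcancel : ∀ a b c : Fin n,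
      (∑ κ, Christoffel g G κ a b x * Riem g G ρ σ κ c x)
        + (∑ κ, Christoffel g G κ b a x * Riem g G ρ σ c κ x) = 0 := by
    intro a b c
    rw [← Finset.sum_add_distrib]
    refine Finset.sum_eq_zero fun κ _ => ?_
    rw [Gamma_symm g G hsym κ b a x, Riem_antisym g G ρ σ c κ x]
    ring
  have e1 := hcancel lam μ ν
  have e2 := hcancel μ ν lam
  have e3 := hcancel ν lam μ
  simp only [CovDRiem]
  linarith [hmat, e1, e2, e3]

/-- `(1,1)`-form of the Ricci tensor: `P^ρ_μ = ∑_α G^{ρα} Ric_{μα}`. -/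
def Pmix (ρ μ : Fin n) (x : Fin n → ℝ) : ℝ := ∑ α, G x ρ α * RicciC g G μ α x

/-- Covariant derivative of the Ricci tensor `∇_λ Ric_{μν}`. -/
def nablaRic (lam μ ν : Fin n) (x : Fin n → ℝ) : ℝ :=
  pd lam (RicciC g G μ ν) x - (∑ κ, Christoffel g G κ lam μ x * RicciC g G κ ν x)
    - ∑ κ, Christoffel g G κ lam ν x * RicciC g G μ κ x

include hg hG in
lemma Sm_Ric (μ ν : Fin n) : Sm (RicciC g G μ ν) := by
  have hΓ : ∀ a b c : Fin n, Sm (Christoffel g G a b c) := fun a b c => Sm_Gamma g G hg hG a b c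
  have h1 : Sm (fun x => ∑ α, pd α (fun y => Christoffel g G α μ ν y) x) :=
    Sm.sum Finset.univ fun α => (hΓ α μ ν).pd α
  have h2 : Sm (fun x => ∑ α, pd μ (fun y => Christoffel g G α α ν y) x) :=
    Sm.sum Finset.univ fun α => (hΓ α α ν).pd μ
  have h3 : Sm (fun x => ∑ α, ∑ β, Christoffel g G α α β x * Christoffel g G β μ ν x) :=
    Sm.sum Finset.univ fun α => Sm.sum Finset.univ fun β => (hΓ α α β).mul (hΓ β μ ν)
  have h4 : Sm (fun x => ∑ α, ∑ β, Christoffel g G α μ β x * Christoffel g G β α ν x) :=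
    Sm.sum Finset.univ fun α => Sm.sum Finset.univ fun β => (hΓ α μ β).mul (hΓ β α ν)
  exact ((h1.sub h2).add h3).sub h4

include hg hG hsym in
/-- trace over second and fifth indices. -/
lemma trace_CovD_25 (μ ν σ : Fin n) (x : Fin n → ℝ) :
    (∑ ρ, CovDRiem g G μ ρ σ ν ρ x) = -nablaRic g G μ ν σ x := by
  have hΓ : ∀ a b c : Fin n, Sm (Christoffel g G a b c) := fun a b c => Sm_Gamma g G hg hG a b c
  -- the pd term
  have hpd : (∑ ρ, pd μ (Riem g G ρ σ ν ρ) x) = -pd μ (RicciC g G ν σ) x := by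
    have h0 : (fun y => ∑ ρ, Riem g G ρ σ ν ρ y) = fun y => -RicciC g G ν σ y := by
      funext y
      rw [Ricci_eq_trace_Riem g G ν σ y, ← Finset.sum_neg_distrib]
      exact Finset.sum_congr rfl fun ρ _ => by rw [Riem_antisym g G ρ σ ν ρ y]
    calc (∑ ρ, pd μ (Riem g G ρ σ ν ρ) x)
        = pd μ (fun y => ∑ ρ, Riem g G ρ σ ν ρ y) x :=
          (pd_sum Finset.univ (fun ρ => Sm_Riem g G hg hG ρ σ ν ρ) μ x).symm
      _ = pd μ (fun y => -RicciC g G ν σ y) x := by rw [h0]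
      _ = -pd μ (RicciC g G ν σ) x := pd_neg μ x
  -- terms 2 and 5 cancel
  have h25 : (∑ ρ, ∑ κ, Christoffel g G ρ μ κ x * Riem g G κ σ ν ρ x)
      = ∑ ρ, ∑ κ, Christoffel g G κ μ ρ x * Riem g G ρ σ ν κ x := Finset.sum_comm
  -- term 3
  have h3 : (∑ ρ, ∑ κ, Christoffel g G κ μ σ x * Riem g G ρ κ ν ρ x)
      = -∑ κ, Christoffel g G κ μ σ x * RicciC g G ν κ x := by
    rw [Finset.sum_comm, ← Finset.sum_neg_distrib]
    refine Finset.sum_congr rfl fun κ _ => ?_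
    rw [← Finset.mul_sum, Ricci_eq_trace_Riem g G ν κ x]
    rw [show (∑ ρ, Riem g G ρ κ ν ρ x) = -∑ ρ, Riem g G ρ κ ρ ν x from
      by rw [← Finset.sum_neg_distrib]; exact Finset.sum_congr rfl fun ρ _ =>
        by rw [Riem_antisym g G ρ κ ν ρ x]]
    ring
  -- term 4
  have h4 : (∑ ρ, ∑ κ, Christoffel g G κ μ ν x * Riem g G ρ σ κ ρ x)
      = -∑ κ, Christoffel g G κ μ ν x * RicciC g G κ σ x := by
    rw [Finset.sum_comm, ← Finset.sum_neg_distrib]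
    refine Finset.sum_congr rfl fun κ _ => ?_
    rw [← Finset.mul_sum, Ricci_eq_trace_Riem g G κ σ x]
    rw [show (∑ ρ, Riem g G ρ σ κ ρ x) = -∑ ρ, Riem g G ρ σ ρ κ x from
      by rw [← Finset.sum_neg_distrib]; exact Finset.sum_congr rfl fun ρ _ =>
        by rw [Riem_antisym g G ρ σ κ ρ x]]
    ring
  have expand : (∑ ρ, CovDRiem g G μ ρ σ ν ρ x)
      = (∑ ρ, pd μ (Riem g G ρ σ ν ρ) x)
        + (∑ ρ, ∑ κ, Christoffel g G ρ μ κ x * Riem g G κ σ ν ρ x)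
        - (∑ ρ, ∑ κ, Christoffel g G κ μ σ x * Riem g G ρ κ ν ρ x)
        - (∑ ρ, ∑ κ, Christoffel g G κ μ ν x * Riem g G ρ σ κ ρ x)
        - (∑ ρ, ∑ κ, Christoffel g G κ μ ρ x * Riem g G ρ σ ν κ x) := by
    simp only [CovDRiem, Finset.sum_add_distrib, Finset.sum_sub_distrib]
  rw [expand, hpd, h25, h3, h4, nablaRic]
  ring

include hg hG hsym in
/-- trace over second and fourth indices. -/
lemma trace_CovD_24 (ν μ σ : Fin n) (x : Fin n → ℝ) :
    (∑ ρ, CovDRiem g G ν ρ σ ρ μ x) = nablaRic g G ν μ σ x := by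
  have hpd : (∑ ρ, pd ν (Riem g G ρ σ ρ μ) x) = pd ν (RicciC g G μ σ) x := by
    have h0 : (fun y => ∑ ρ, Riem g G ρ σ ρ μ y) = fun y => RicciC g G μ σ y :=
      funext fun y => (Ricci_eq_trace_Riem g G μ σ y).symm
    calc (∑ ρ, pd ν (Riem g G ρ σ ρ μ) x)
        = pd ν (fun y => ∑ ρ, Riem g G ρ σ ρ μ y) x :=
          (pd_sum Finset.univ (fun ρ => Sm_Riem g G hg hG ρ σ ρ μ) ν x).symm
      _ = pd ν (RicciC g G μ σ) x := by rw [h0]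
  have h24 : (∑ ρ, ∑ κ, Christoffel g G ρ ν κ x * Riem g G κ σ ρ μ x)
      = ∑ ρ, ∑ κ, Christoffel g G κ ν ρ x * Riem g G ρ σ κ μ x := Finset.sum_comm
  have h3 : (∑ ρ, ∑ κ, Christoffel g G κ ν σ x * Riem g G ρ κ ρ μ x)
      = ∑ κ, Christoffel g G κ ν σ x * RicciC g G μ κ x := by
    rw [Finset.sum_comm]
    refine Finset.sum_congr rfl fun κ _ => ?_
    rw [← Finset.mul_sum, ← Ricci_eq_trace_Riem g G μ κ x]
  have h5 : (∑ ρ, ∑ κ, Christoffel g G κ ν μ x * Riem g G ρ σ ρ κ x)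
      = ∑ κ, Christoffel g G κ ν μ x * RicciC g G κ σ x := by
    rw [Finset.sum_comm]
    refine Finset.sum_congr rfl fun κ _ => ?_
    rw [← Finset.mul_sum, ← Ricci_eq_trace_Riem g G κ σ x]
  have expand : (∑ ρ, CovDRiem g G ν ρ σ ρ μ x)
      = (∑ ρ, pd ν (Riem g G ρ σ ρ μ) x)
        + (∑ ρ, ∑ κ, Christoffel g G ρ ν κ x * Riem g G κ σ ρ μ x)
        - (∑ ρ, ∑ κ, Christoffel g G κ ν σ x * Riem g G ρ κ ρ μ x)
        - (∑ ρ, ∑ κ, Christoffel g G κ ν ρ x * Riem g G ρ σ κ μ x)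
        - (∑ ρ, ∑ κ, Christoffel g G κ ν μ x * Riem g G ρ σ ρ κ x) := by
    simp only [CovDRiem, Finset.sum_add_distrib, Finset.sum_sub_distrib]
  rw [expand, hpd, h24, h3, h5, nablaRic]
  ring

include hg hG hsym in
/-- Once-contracted second Bianchi identity. -/
lemma bianchi_once (σ μ ν : Fin n) (x : Fin n → ℝ) :
    (∑ ρ, CovDRiem g G ρ ρ σ μ ν x) - nablaRic g G μ ν σ x + nablaRic g G ν μ σ x = 0 := by
  have h := Finset.sum_congr rfl fun ρ (_ : ρ ∈ (Finset.univ : Finset (Fin n))) =>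
    bianchi g G hg hG hsym ρ μ ν ρ σ x
  rw [Finset.sum_add_distrib, Finset.sum_add_distrib, Finset.sum_const, smul_zero] at h
  rw [trace_CovD_25 g G hg hG hsym μ ν σ x, trace_CovD_24 g G hg hG hsym ν μ σ x] at h
  linarith [h]

lemma sum_swap13 (F : Fin n → Fin n → Fin n → ℝ) :
    (∑ a, ∑ b, ∑ c, F a b c) = ∑ a, ∑ b, ∑ c, F c b a := by
  calc (∑ a, ∑ b, ∑ c, F a b c)
      = ∑ a, ∑ c, ∑ b, F a b c := Finset.sum_congr rfl fun _ _ => Finset.sum_comm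
    _ = ∑ c, ∑ a, ∑ b, F a b c := Finset.sum_comm
    _ = ∑ c, ∑ b, ∑ a, F a b c := Finset.sum_congr rfl fun _ _ => Finset.sum_comm

lemma sum_swap23 (F : Fin n → Fin n → Fin n → ℝ) :
    (∑ a, ∑ b, ∑ c, F a b c) = ∑ a, ∑ b, ∑ c, F a c b :=
  Finset.sum_congr rfl fun _ _ => Finset.sum_comm

lemma sum_swap12 (F : Fin n → Fin n → Fin n → ℝ) :
    (∑ a, ∑ b, ∑ c, F a b c) = ∑ a, ∑ b, ∑ c, F b a c := Finset.sum_comm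

lemma sum_rot3 (F : Fin n → Fin n → Fin n → ℝ) :
    (∑ a, ∑ b, ∑ c, F a b c) = ∑ a, ∑ b, ∑ c, F c a b := by
  calc (∑ a, ∑ b, ∑ c, F a b c)
      = ∑ a, ∑ b, ∑ c, F b a c := sum_swap12 F
    _ = ∑ a, ∑ b, ∑ c, F c a b := sum_swap23 fun a b c => F b a c

lemma sum_rot3' (F : Fin n → Fin n → Fin n → ℝ) :
    (∑ a, ∑ b, ∑ c, F a b c) = ∑ a, ∑ b, ∑ c, F b c a :=
  (sum_rot3 fun a b c => F b c a).symm

lemma pd_sum_mul (A B : Fin n → (Fin n → ℝ) → ℝ)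
    (hA : ∀ a, Sm (A a)) (hB : ∀ a, Sm (B a)) (i : Fin n) (x : Fin n → ℝ) :
    pd i (fun y => ∑ a, A a y * B a y) x
      = ∑ a, (pd i (A a) x * B a x + A a x * pd i (B a) x) := by
  rw [pd_sum Finset.univ (fun a => (hA a).mul (hB a)) i x]
  exact Finset.sum_congr rfl fun a _ => pd_mul (hA a) (hB a) i x

lemma pd_dsum_mul (A B : Fin n → Fin n → (Fin n → ℝ) → ℝ)
    (hA : ∀ a b, Sm (A a b)) (hB : ∀ a b, Sm (B a b)) (i : Fin n) (x : Fin n → ℝ) :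
    pd i (fun y => ∑ a, ∑ b, A a b y * B a b y) x
      = ∑ a, ∑ b, (pd i (A a b) x * B a b x + A a b x * pd i (B a b) x) := by
  rw [pd_sum Finset.univ (fun a => Sm.sum Finset.univ fun b => (hA a b).mul (hB a b)) i x]
  exact Finset.sum_congr rfl fun a _ => pd_sum_mul (A a) (B a) (hA a) (hB a) i x

/-- Scalar curvature. -/
def Rs (x : Fin n → ℝ) : ℝ := ∑ σ, ∑ ν, G x σ ν * RicciC g G ν σ x

include hg hG hsym hinv in
/-- `∑_{σν} G^{σν} ∇_μ Ric_{νσ} = ∂_μ R`. -/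
lemma sumG_nablaRic_same (μ : Fin n) (x : Fin n → ℝ) :
    (∑ σ, ∑ ν, G x σ ν * nablaRic g G μ ν σ x) = pd μ (Rs g G) x := by
  have hRic : ∀ a b : Fin n, Sm (RicciC g G a b) := fun a b => Sm_Ric g G hg hG a b
  have hpdRs : pd μ (Rs g G) x
      = ∑ σ, ∑ ν, (pd μ (fun y => G y σ ν) x * RicciC g G ν σ x
          + G x σ ν * pd μ (RicciC g G ν σ) x) :=
    pd_dsum_mul (fun σ ν y => G y σ ν) (fun σ ν => RicciC g G ν σ)
      (fun σ ν => hG σ ν) (fun σ ν => hRic ν σ) μ x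
  have perσν : ∀ σ ν : Fin n, pd μ (fun y => G y σ ν) x * RicciC g G ν σ x
      = -(∑ κ, Christoffel g G σ μ κ x * G x κ ν * RicciC g G ν σ x)
        - ∑ κ, Christoffel g G ν μ κ x * G x σ κ * RicciC g G ν σ x := by
    intro σ ν
    rw [pd_G g G hg hG hsym hinv μ σ ν x, neg_mul, Finset.sum_mul]
    have hptw : ∀ ρ : Fin n,
        (Christoffel g G σ μ ρ x * G x ρ ν + Christoffel g G ν μ ρ x * G x σ ρ)
            * RicciC g G ν σ x
          = Christoffel g G σ μ ρ x * G x ρ ν * RicciC g G ν σ x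
            + Christoffel g G ν μ ρ x * G x σ ρ * RicciC g G ν σ x := fun ρ => by ring
    rw [Finset.sum_congr rfl fun ρ _ => hptw ρ, Finset.sum_add_distrib]
    ring
  have hpdG : (∑ σ, ∑ ν, pd μ (fun y => G y σ ν) x * RicciC g G ν σ x)
      = -((∑ σ, ∑ ν, ∑ κ, G x σ ν * (Christoffel g G κ μ ν x * RicciC g G κ σ x))
        + ∑ σ, ∑ ν, ∑ κ, G x σ ν * (Christoffel g G κ μ σ x * RicciC g G ν κ x)) := by
    have e1 : (∑ σ, ∑ ν, pd μ (fun y => G y σ ν) x * RicciC g G ν σ x)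
        = -((∑ σ, ∑ ν, ∑ κ, Christoffel g G σ μ κ x * G x κ ν * RicciC g G ν σ x)
          + ∑ σ, ∑ ν, ∑ κ, Christoffel g G ν μ κ x * G x σ κ * RicciC g G ν σ x) := by
      rw [Finset.sum_congr rfl fun σ (_ : σ ∈ Finset.univ) =>
        Finset.sum_congr rfl fun ν (_ : ν ∈ Finset.univ) => perσν σ ν]
      simp only [Finset.sum_sub_distrib, Finset.sum_neg_distrib]
      ring
    have hA : (∑ σ, ∑ ν, ∑ κ, Christoffel g G σ μ κ x * G x κ ν * RicciC g G ν σ x)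
        = ∑ σ, ∑ ν, ∑ κ, G x σ ν * (Christoffel g G κ μ σ x * RicciC g G ν κ x) := by
      rw [sum_swap13 (fun a b c => Christoffel g G a μ c x * G x c b * RicciC g G b a x)]
      exact Finset.sum_congr rfl fun a _ => Finset.sum_congr rfl fun b _ =>
        Finset.sum_congr rfl fun c _ => by ring
    have hB : (∑ σ, ∑ ν, ∑ κ, Christoffel g G ν μ κ x * G x σ κ * RicciC g G ν σ x)
        = ∑ σ, ∑ ν, ∑ κ, G x σ ν * (Christoffel g G κ μ ν x * RicciC g G κ σ x) := by
      rw [sum_swap23 (fun a b c => Christoffel g G b μ c x * G x a c * RicciC g G b a x)]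
      exact Finset.sum_congr rfl fun a _ => Finset.sum_congr rfl fun b _ =>
        Finset.sum_congr rfl fun c _ => by ring
    rw [e1, hA, hB]
    ring
  have expand : (∑ σ, ∑ ν, G x σ ν * nablaRic g G μ ν σ x)
      = (∑ σ, ∑ ν, G x σ ν * pd μ (RicciC g G ν σ) x)
        - (∑ σ, ∑ ν, ∑ κ, G x σ ν * (Christoffel g G κ μ ν x * RicciC g G κ σ x))
        - ∑ σ, ∑ ν, ∑ κ, G x σ ν * (Christoffel g G κ μ σ x * RicciC g G ν κ x) := by
    simp only [nablaRic, mul_sub, Finset.sum_sub_distrib, Finset.mul_sum]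
  rw [expand, hpdRs]
  rw [show (∑ σ, ∑ ν, (pd μ (fun y => G y σ ν) x * RicciC g G ν σ x
      + G x σ ν * pd μ (RicciC g G ν σ) x))
      = (∑ σ, ∑ ν, pd μ (fun y => G y σ ν) x * RicciC g G ν σ x)
        + ∑ σ, ∑ ν, G x σ ν * pd μ (RicciC g G ν σ) x from by
    simp only [Finset.sum_add_distrib]]
  rw [hpdG]
  ring

include hg hG hsym hinv in
lemma sumG_CovD (ρ μ : Fin n) (x : Fin n → ℝ) :
    (∑ σ, ∑ ν, G x σ ν * CovDRiem g G ρ ρ σ μ ν x)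
      = pd ρ (Pmix g G ρ μ) x + (∑ κ, Christoffel g G ρ ρ κ x * Pmix g G κ μ x)
        - ∑ κ, Christoffel g G κ ρ μ x * Pmix g G ρ κ x := by
  have hRiem : ∀ a b c d : Fin n, Sm (Riem g G a b c d) := fun a b c d => Sm_Riem g G hg hG a b c d
  -- expansion of the contraction into five triple sums
  have expand : (∑ σ, ∑ ν, G x σ ν * CovDRiem g G ρ ρ σ μ ν x)
      = (∑ σ, ∑ ν, G x σ ν * pd ρ (Riem g G ρ σ μ ν) x)
        + (∑ σ, ∑ ν, ∑ κ, G x σ ν * (Christoffel g G ρ ρ κ x * Riem g G κ σ μ ν x))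
        - (∑ σ, ∑ ν, ∑ κ, G x σ ν * (Christoffel g G κ ρ σ x * Riem g G ρ κ μ ν x))
        - (∑ σ, ∑ ν, ∑ κ, G x σ ν * (Christoffel g G κ ρ μ x * Riem g G ρ σ κ ν x))
        - ∑ σ, ∑ ν, ∑ κ, G x σ ν * (Christoffel g G κ ρ ν x * Riem g G ρ σ μ κ x) := by
    simp only [CovDRiem, mul_add, mul_sub, Finset.mul_sum, Finset.sum_add_distrib,
      Finset.sum_sub_distrib]
  -- the derivative term produces `pd ρ Pmix` plus correction terms
  have hPfun : Pmix g G ρ μ = fun y => ∑ σ, ∑ ν, G y σ ν * Riem g G ρ σ μ ν y :=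
    funext fun y => (GG_Riem g G hg hG hsym hinv ρ μ y).symm
  have hpdP : pd ρ (Pmix g G ρ μ) x
      = ∑ σ, ∑ ν, (pd ρ (fun y => G y σ ν) x * Riem g G ρ σ μ ν x
          + G x σ ν * pd ρ (Riem g G ρ σ μ ν) x) := by
    rw [hPfun]
    exact pd_dsum_mul (fun σ ν y => G y σ ν) (fun σ ν => Riem g G ρ σ μ ν)
      (fun σ ν => hG σ ν) (fun σ ν => hRiem ρ σ μ ν) ρ x
  have perσν : ∀ σ ν : Fin n, pd ρ (fun y => G y σ ν) x * Riem g G ρ σ μ ν x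
      = -(∑ κ, Christoffel g G σ ρ κ x * G x κ ν * Riem g G ρ σ μ ν x)
        - ∑ κ, Christoffel g G ν ρ κ x * G x σ κ * Riem g G ρ σ μ ν x := by
    intro σ ν
    rw [pd_G g G hg hG hsym hinv ρ σ ν x, neg_mul, Finset.sum_mul]
    have hptw : ∀ κ : Fin n,
        (Christoffel g G σ ρ κ x * G x κ ν + Christoffel g G ν ρ κ x * G x σ κ)
            * Riem g G ρ σ μ ν x
          = Christoffel g G σ ρ κ x * G x κ ν * Riem g G ρ σ μ ν x
            + Christoffel g G ν ρ κ x * G x σ κ * Riem g G ρ σ μ ν x := fun κ => by ring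
    rw [Finset.sum_congr rfl fun κ _ => hptw κ, Finset.sum_add_distrib]
    ring
  have hA : (∑ σ, ∑ ν, ∑ κ, Christoffel g G σ ρ κ x * G x κ ν * Riem g G ρ σ μ ν x)
      = ∑ σ, ∑ ν, ∑ κ, G x σ ν * (Christoffel g G κ ρ σ x * Riem g G ρ κ μ ν x) := by
    rw [sum_swap13 (fun a b c => Christoffel g G a ρ c x * G x c b * Riem g G ρ a μ b x)]
    exact Finset.sum_congr rfl fun a _ => Finset.sum_congr rfl fun b _ =>
      Finset.sum_congr rfl fun c _ => by ring
  have hB : (∑ σ, ∑ ν, ∑ κ, Christoffel g G ν ρ κ x * G x σ κ * Riem g G ρ σ μ ν x)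
      = ∑ σ, ∑ ν, ∑ κ, G x σ ν * (Christoffel g G κ ρ ν x * Riem g G ρ σ μ κ x) := by
    rw [sum_swap23 (fun a b c => Christoffel g G b ρ c x * G x a c * Riem g G ρ a μ b x)]
    exact Finset.sum_congr rfl fun a _ => Finset.sum_congr rfl fun b _ =>
      Finset.sum_congr rfl fun c _ => by ring
  have e1 : (∑ σ, ∑ ν, pd ρ (fun y => G y σ ν) x * Riem g G ρ σ μ ν x)
      = -((∑ σ, ∑ ν, ∑ κ, Christoffel g G σ ρ κ x * G x κ ν * Riem g G ρ σ μ ν x)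
        + ∑ σ, ∑ ν, ∑ κ, Christoffel g G ν ρ κ x * G x σ κ * Riem g G ρ σ μ ν x) := by
    rw [Finset.sum_congr rfl fun σ (_ : σ ∈ Finset.univ) =>
      Finset.sum_congr rfl fun ν (_ : ν ∈ Finset.univ) => perσν σ ν]
    simp only [Finset.sum_sub_distrib, Finset.sum_neg_distrib]
    ring
  have hsplit : pd ρ (Pmix g G ρ μ) x
      = (∑ σ, ∑ ν, pd ρ (fun y => G y σ ν) x * Riem g G ρ σ μ ν x)
        + ∑ σ, ∑ ν, G x σ ν * pd ρ (Riem g G ρ σ μ ν) x := by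
    rw [hpdP]
    simp only [Finset.sum_add_distrib]
  have hT1 : (∑ σ, ∑ ν, G x σ ν * pd ρ (Riem g G ρ σ μ ν) x)
      = pd ρ (Pmix g G ρ μ) x
        + (∑ σ, ∑ ν, ∑ κ, G x σ ν * (Christoffel g G κ ρ σ x * Riem g G ρ κ μ ν x))
        + ∑ σ, ∑ ν, ∑ κ, G x σ ν * (Christoffel g G κ ρ ν x * Riem g G ρ σ μ κ x) := by
    rw [← hA, ← hB]
    linarith [e1, hsplit]
  -- trace terms
  have hT2 : (∑ σ, ∑ ν, ∑ κ, G x σ ν * (Christoffel g G ρ ρ κ x * Riem g G κ σ μ ν x))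
      = ∑ κ, Christoffel g G ρ ρ κ x * Pmix g G κ μ x := by
    rw [sum_rot3' (fun a b c => G x a b * (Christoffel g G ρ ρ c x * Riem g G c a μ b x))]
    refine Finset.sum_congr rfl fun a _ => ?_
    rw [Pmix, ← GG_Riem g G hg hG hsym hinv a μ x, Finset.mul_sum]
    refine Finset.sum_congr rfl fun b _ => ?_
    rw [Finset.mul_sum]
    exact Finset.sum_congr rfl fun c _ => by ring
  have hT4 : (∑ σ, ∑ ν, ∑ κ, G x σ ν * (Christoffel g G κ ρ μ x * Riem g G ρ σ κ ν x))
      = ∑ κ, Christoffel g G κ ρ μ x * Pmix g G ρ κ x := by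
    rw [sum_rot3' (fun a b c => G x a b * (Christoffel g G c ρ μ x * Riem g G ρ a c b x))]
    refine Finset.sum_congr rfl fun a _ => ?_
    rw [Pmix, ← GG_Riem g G hg hG hsym hinv ρ a x, Finset.mul_sum]
    refine Finset.sum_congr rfl fun b _ => ?_
    rw [Finset.mul_sum]
    exact Finset.sum_congr rfl fun c _ => by ring
  rw [expand, hT1, hT2, hT4]
  ring

include hg hG hsym hinv in
lemma divP_eq (μ : Fin n) (x : Fin n → ℝ) :
    (∑ ρ, pd ρ (Pmix g G ρ μ) x) + (∑ ρ, ∑ κ, Christoffel g G ρ ρ κ x * Pmix g G κ μ x)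
        - (∑ ρ, ∑ κ, Christoffel g G κ ρ μ x * Pmix g G ρ κ x)
      = ∑ σ, ∑ ν, G x σ ν * nablaRic g G ν μ σ x := by
  have hRic : ∀ a b : Fin n, Sm (RicciC g G a b) := fun a b => Sm_Ric g G hg hG a b
  -- expand `pd ρ (Pmix ρ μ)`
  have hpdP : ∀ ρ : Fin n, pd ρ (Pmix g G ρ μ) x
      = ∑ α, (pd ρ (fun y => G y ρ α) x * RicciC g G μ α x
          + G x ρ α * pd ρ (RicciC g G μ α) x) := by
    intro ρ
    have h0 : Pmix g G ρ μ = fun y => ∑ α, G y ρ α * RicciC g G μ α y := rfl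
    rw [h0]
    exact pd_sum_mul (fun α y => G y ρ α) (fun α => RicciC g G μ α)
      (fun α => hG ρ α) (fun α => hRic μ α) ρ x
  have perρα : ∀ ρ α : Fin n, pd ρ (fun y => G y ρ α) x * RicciC g G μ α x
      = -(∑ κ, Christoffel g G ρ ρ κ x * G x κ α * RicciC g G μ α x)
        - ∑ κ, Christoffel g G α ρ κ x * G x ρ κ * RicciC g G μ α x := by
    intro ρ α
    rw [pd_G g G hg hG hsym hinv ρ ρ α x, neg_mul, Finset.sum_mul]
    have hptw : ∀ κ : Fin n,
        (Christoffel g G ρ ρ κ x * G x κ α + Christoffel g G α ρ κ x * G x ρ κ)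
            * RicciC g G μ α x
          = Christoffel g G ρ ρ κ x * G x κ α * RicciC g G μ α x
            + Christoffel g G α ρ κ x * G x ρ κ * RicciC g G μ α x := fun κ => by ring
    rw [Finset.sum_congr rfl fun κ _ => hptw κ, Finset.sum_add_distrib]
    ring
  have hsum1 : (∑ ρ, pd ρ (Pmix g G ρ μ) x)
      = (∑ ρ, ∑ α, G x ρ α * pd ρ (RicciC g G μ α) x)
        - (∑ ρ, ∑ α, ∑ κ, Christoffel g G ρ ρ κ x * G x κ α * RicciC g G μ α x)
        - ∑ ρ, ∑ α, ∑ κ, Christoffel g G α ρ κ x * G x ρ κ * RicciC g G μ α x := by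
    rw [Finset.sum_congr rfl fun ρ (_ : ρ ∈ Finset.univ) => hpdP ρ]
    rw [Finset.sum_congr rfl fun ρ (_ : ρ ∈ Finset.univ) =>
      Finset.sum_congr rfl fun α (_ : α ∈ Finset.univ) => by rw [perρα ρ α]]
    simp only [Finset.sum_add_distrib, Finset.sum_sub_distrib, Finset.sum_neg_distrib]
    ring
  -- expansion of Pmix inside trace sums
  have hTr1 : (∑ ρ, ∑ κ, Christoffel g G ρ ρ κ x * Pmix g G κ μ x)
      = ∑ ρ, ∑ α, ∑ κ, Christoffel g G ρ ρ κ x * G x κ α * RicciC g G μ α x := by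
    rw [sum_swap23 (fun ρ α κ => Christoffel g G ρ ρ κ x * G x κ α * RicciC g G μ α x)]
    refine Finset.sum_congr rfl fun ρ _ => Finset.sum_congr rfl fun κ _ => ?_
    rw [Pmix, Finset.mul_sum]
    exact Finset.sum_congr rfl fun α _ => by ring
  have hTr2 : (∑ ρ, ∑ κ, Christoffel g G κ ρ μ x * Pmix g G ρ κ x)
      = ∑ ρ, ∑ κ, ∑ α, Christoffel g G κ ρ μ x * G x ρ α * RicciC g G κ α x := by
    refine Finset.sum_congr rfl fun ρ _ => Finset.sum_congr rfl fun κ _ => ?_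
    rw [Pmix, Finset.mul_sum]
    exact Finset.sum_congr rfl fun α _ => by ring
  -- matching with the right-hand side
  have hRHS : (∑ σ, ∑ ν, G x σ ν * nablaRic g G ν μ σ x)
      = (∑ σ, ∑ ν, G x σ ν * pd ν (RicciC g G μ σ) x)
        - (∑ σ, ∑ ν, ∑ κ, G x σ ν * (Christoffel g G κ ν μ x * RicciC g G κ σ x))
        - ∑ σ, ∑ ν, ∑ κ, G x σ ν * (Christoffel g G κ ν σ x * RicciC g G μ κ x) := by
    simp only [nablaRic, mul_sub, Finset.mul_sum, Finset.sum_sub_distrib]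
  have m1 : (∑ ρ, ∑ α, G x ρ α * pd ρ (RicciC g G μ α) x)
      = ∑ σ, ∑ ν, G x σ ν * pd ν (RicciC g G μ σ) x := by
    rw [Finset.sum_comm]
    refine Finset.sum_congr rfl fun a _ => Finset.sum_congr rfl fun b _ => ?_
    rw [G_symm g G hsym hinv x b a]
  have m2 : (∑ ρ, ∑ κ, ∑ α, Christoffel g G κ ρ μ x * G x ρ α * RicciC g G κ α x)
      = ∑ σ, ∑ ν, ∑ κ, G x σ ν * (Christoffel g G κ ν μ x * RicciC g G κ σ x) := by
    rw [sum_rot3' (fun a b c => Christoffel g G b a μ x * G x a c * RicciC g G b c x)]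
    refine Finset.sum_congr rfl fun a _ => Finset.sum_congr rfl fun b _ =>
      Finset.sum_congr rfl fun c _ => ?_
    rw [G_symm g G hsym hinv x b a]
    ring
  have m3 : (∑ ρ, ∑ α, ∑ κ, Christoffel g G α ρ κ x * G x ρ κ * RicciC g G μ α x)
      = ∑ σ, ∑ ν, ∑ κ, G x σ ν * (Christoffel g G κ ν σ x * RicciC g G μ κ x) := by
    rw [sum_rot3' (fun a b c => Christoffel g G b a c x * G x a c * RicciC g G μ b x)]
    refine Finset.sum_congr rfl fun a _ => Finset.sum_congr rfl fun b _ =>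
      Finset.sum_congr rfl fun c _ => ?_
    rw [G_symm g G hsym hinv x b a]
    ring
  rw [hsum1, hTr1, hTr2, hRHS, ← m1, ← m2, ← m3]
  ring

include hg hG hsym hinv in
/-- Twice-contracted second Bianchi identity: `2 ∇^ν Ric_{μν} = ∂_μ R`. -/
lemma twice_contracted_bianchi (μ : Fin n) (x : Fin n → ℝ) :
    2 * (∑ σ, ∑ ν, G x σ ν * nablaRic g G ν μ σ x) = pd μ (Rs g G) x := by
  have h0 : ∀ σ ν : Fin n,
      G x σ ν * (∑ ρ, CovDRiem g G ρ ρ σ μ ν x)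
        - G x σ ν * nablaRic g G μ ν σ x + G x σ ν * nablaRic g G ν μ σ x = 0 := by
    intro σ ν
    have hb := bianchi_once g G hg hG hsym σ μ ν x
    calc G x σ ν * (∑ ρ, CovDRiem g G ρ ρ σ μ ν x)
        - G x σ ν * nablaRic g G μ ν σ x + G x σ ν * nablaRic g G ν μ σ x
        = G x σ ν * ((∑ ρ, CovDRiem g G ρ ρ σ μ ν x)
            - nablaRic g G μ ν σ x + nablaRic g G ν μ σ x) := by ring
      _ = 0 := by rw [hb, mul_zero]
  have hsum : (∑ σ, ∑ ν, G x σ ν * (∑ ρ, CovDRiem g G ρ ρ σ μ ν x))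
      - (∑ σ, ∑ ν, G x σ ν * nablaRic g G μ ν σ x)
      + (∑ σ, ∑ ν, G x σ ν * nablaRic g G ν μ σ x) = 0 := by
    have := Finset.sum_congr rfl fun σ (_ : σ ∈ (Finset.univ : Finset (Fin n))) =>
      Finset.sum_congr rfl fun ν (_ : ν ∈ (Finset.univ : Finset (Fin n))) => h0 σ ν
    simp only [Finset.sum_add_distrib, Finset.sum_sub_distrib, Finset.sum_const_zero] at this
    linarith [this]
  have hfirst : (∑ σ, ∑ ν, G x σ ν * (∑ ρ, CovDRiem g G ρ ρ σ μ ν x))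
      = ∑ σ, ∑ ν, G x σ ν * nablaRic g G ν μ σ x := by
    calc (∑ σ, ∑ ν, G x σ ν * (∑ ρ, CovDRiem g G ρ ρ σ μ ν x))
        = ∑ σ, ∑ ν, ∑ ρ, G x σ ν * CovDRiem g G ρ ρ σ μ ν x := by
          exact Finset.sum_congr rfl fun σ _ => Finset.sum_congr rfl fun ν _ => by
            rw [Finset.mul_sum]
      _ = ∑ ρ, ∑ σ, ∑ ν, G x σ ν * CovDRiem g G ρ ρ σ μ ν x := by
          rw [sum_rot3 (fun ρ σ ν => G x σ ν * CovDRiem g G ρ ρ σ μ ν x)]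
      _ = ∑ ρ, (pd ρ (Pmix g G ρ μ) x + (∑ κ, Christoffel g G ρ ρ κ x * Pmix g G κ μ x)
            - ∑ κ, Christoffel g G κ ρ μ x * Pmix g G ρ κ x) :=
          Finset.sum_congr rfl fun ρ _ => sumG_CovD g G hg hG hsym hinv ρ μ x
      _ = (∑ ρ, pd ρ (Pmix g G ρ μ) x)
            + (∑ ρ, ∑ κ, Christoffel g G ρ ρ κ x * Pmix g G κ μ x)
            - ∑ ρ, ∑ κ, Christoffel g G κ ρ μ x * Pmix g G ρ κ x := by
          simp only [Finset.sum_add_distrib, Finset.sum_sub_distrib]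
      _ = ∑ σ, ∑ ν, G x σ ν * nablaRic g G ν μ σ x := divP_eq g G hg hG hsym hinv μ x
  rw [hfirst, sumG_nablaRic_same g G hg hG hsym hinv μ x] at hsum
  linarith [hsum]

include hg hG in
lemma Sm_Rs : Sm (Rs g G) :=
  Sm.sum Finset.univ fun σ => Sm.sum Finset.univ fun ν => (hG σ ν).mul (Sm_Ric g G hg hG ν σ)

include hg hG hsym hinv in
/-- The covariant divergence of `Ric + c·g` vanishes when `∂c = −½∂R`. -/
lemma covdiv_einstein (c : (Fin n → ℝ) → ℝ) (hc : Sm c)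
    (hcpd : ∀ (x : Fin n → ℝ) (ν : Fin n), pd ν c x = -(1/2) * pd ν (Rs g G) x)
    (ν : Fin n) (x : Fin n → ℝ) :
    (∑ μ, ∑ α, G x μ α * (pd α (fun y => RicciC g G μ ν y + c y * g y μ ν) x
       - (∑ σ, Christoffel g G σ α μ x * (RicciC g G σ ν x + c x * g x σ ν))
       - ∑ σ, Christoffel g G σ α ν x * (RicciC g G μ σ x + c x * g x μ σ))) = 0 := by
  have hRic : ∀ a b : Fin n, Sm (RicciC g G a b) := fun a b => Sm_Ric g G hg hG a b
  have hbr : ∀ μ α : Fin n,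
      (pd α (fun y => RicciC g G μ ν y + c y * g y μ ν) x
        - (∑ σ, Christoffel g G σ α μ x * (RicciC g G σ ν x + c x * g x σ ν))
        - ∑ σ, Christoffel g G σ α ν x * (RicciC g G μ σ x + c x * g x μ σ))
      = (pd α (RicciC g G μ ν) x
          - (∑ σ, Christoffel g G σ α μ x * RicciC g G σ ν x)
          - ∑ σ, Christoffel g G σ α ν x * RicciC g G μ σ x)
        + pd α c x * g x μ ν := by
    intro μ α
    rw [pd_add (hRic μ ν) (hc.mul (hg μ ν)), pd_mul hc (hg μ ν),
      metric_compat g G hsym hinv α μ ν x]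
    rw [show (∑ σ, Christoffel g G σ α μ x * (RicciC g G σ ν x + c x * g x σ ν))
        = (∑ σ, Christoffel g G σ α μ x * RicciC g G σ ν x)
          + c x * ∑ σ, Christoffel g G σ α μ x * g x σ ν from by
      rw [Finset.mul_sum, ← Finset.sum_add_distrib]
      exact Finset.sum_congr rfl fun σ _ => by ring]
    rw [show (∑ σ, Christoffel g G σ α ν x * (RicciC g G μ σ x + c x * g x μ σ))
        = (∑ σ, Christoffel g G σ α ν x * RicciC g G μ σ x)
          + c x * ∑ σ, Christoffel g G σ α ν x * g x μ σ from by
      rw [Finset.mul_sum, ← Finset.sum_add_distrib]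
      exact Finset.sum_congr rfl fun σ _ => by ring]
    ring
  have hsplit : (∑ μ, ∑ α, G x μ α * (pd α (fun y => RicciC g G μ ν y + c y * g y μ ν) x
       - (∑ σ, Christoffel g G σ α μ x * (RicciC g G σ ν x + c x * g x σ ν))
       - ∑ σ, Christoffel g G σ α ν x * (RicciC g G μ σ x + c x * g x μ σ)))
      = (∑ μ, ∑ α, G x μ α * (pd α (RicciC g G μ ν) x
          - (∑ σ, Christoffel g G σ α μ x * RicciC g G σ ν x)
          - ∑ σ, Christoffel g G σ α ν x * RicciC g G μ σ x))
        + ∑ μ, ∑ α, G x μ α * (pd α c x * g x μ ν) := by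
    rw [← Finset.sum_add_distrib]
    refine Finset.sum_congr rfl fun μ _ => ?_
    rw [← Finset.sum_add_distrib]
    refine Finset.sum_congr rfl fun α _ => ?_
    rw [hbr μ α]
    ring
  have hsec : (∑ μ, ∑ α, G x μ α * (pd α c x * g x μ ν)) = pd ν c x := by
    rw [Finset.sum_comm]
    calc (∑ α, ∑ μ, G x μ α * (pd α c x * g x μ ν))
        = ∑ α, (if α = ν then (1:ℝ) else 0) * pd α c x := by
          refine Finset.sum_congr rfl fun α _ => ?_
          rw [show (∑ μ, G x μ α * (pd α c x * g x μ ν))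
              = (∑ μ, G x α μ * g x μ ν) * pd α c x from by
            rw [Finset.sum_mul]
            exact Finset.sum_congr rfl fun μ _ => by
              rw [G_symm g G hsym hinv x α μ]; ring]
          rw [Gg_delta g G hsym hinv x α ν]
      _ = pd ν c x := by simp [Finset.sum_ite_eq']
  have hfir : (∑ μ, ∑ α, G x μ α * (pd α (RicciC g G μ ν) x
          - (∑ σ, Christoffel g G σ α μ x * RicciC g G σ ν x)
          - ∑ σ, Christoffel g G σ α ν x * RicciC g G μ σ x))
      = ∑ σ, ∑ ν', G x σ ν' * nablaRic g G ν' ν σ x := by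
    refine Finset.sum_congr rfl fun a _ => Finset.sum_congr rfl fun b _ => ?_
    congr 1
    rw [nablaRic]
    have e0 : RicciC g G a ν = RicciC g G ν a :=
      funext fun y => Ricci_symm g G hg hG hsym hinv a ν y
    have e1 : (∑ σ, Christoffel g G σ b a x * RicciC g G σ ν x)
        = ∑ σ, Christoffel g G σ b a x * RicciC g G ν σ x :=
      Finset.sum_congr rfl fun σ _ => by rw [Ricci_symm g G hg hG hsym hinv σ ν x]
    have e2 : (∑ σ, Christoffel g G σ b ν x * RicciC g G a σ x)
        = ∑ σ, Christoffel g G σ b ν x * RicciC g G σ a x :=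
      Finset.sum_congr rfl fun σ _ => by rw [Ricci_symm g G hg hG hsym hinv a σ x]
    rw [e0, e1, e2]
    ring
  have htw := twice_contracted_bianchi g G hg hG hsym hinv ν x
  rw [hsplit, hsec, hfir, hcpd x ν]
  linarith [htw]

end Geometry
end TK

/-- Constraint propagation (Lemma 3.9): if `g` solves the gauge-modified Einstein
equation `Ric(g) + Λg − ∇_g* C(g,g₀) = 0`, then the constraint one-form `ψ = C(g,g₀)`
satisfies the hyperbolic equation `−2 ∇_g · Ĝ_g ∇_g* ψ = 0`
(equivalently `□_g ψ − Ric(g)(ψ,·) = 0`). -/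
theorem constraint_propagation (n : ℕ) (Λ : ℝ)
    (g G g0 G0 : (Fin n → ℝ) → Fin n → Fin n → ℝ)
    (hg_smooth : ∀ μ ν, ContDiff ℝ (⊤ : ℕ∞) fun x => g x μ ν)
    (hG_smooth : ∀ μ ν, ContDiff ℝ (⊤ : ℕ∞) fun x => G x μ ν)
    (hg0_smooth : ∀ μ ν, ContDiff ℝ (⊤ : ℕ∞) fun x => g0 x μ ν)
    (hG0_smooth : ∀ μ ν, ContDiff ℝ (⊤ : ℕ∞) fun x => G0 x μ ν)
    (hg_symm : ∀ x μ ν, g x μ ν = g x ν μ)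
    (hg0_symm : ∀ x μ ν, g0 x μ ν = g0 x ν μ)
    (hinv : ∀ x μ ν, (∑ α, g x μ α * G x α ν) = if μ = ν then (1 : ℝ) else 0)
    (hinv0 : ∀ x μ ν, (∑ α, g0 x μ α * G0 x α ν) = if μ = ν then (1 : ℝ) else 0)
    (hEinstein : ∀ (x : Fin n → ℝ) (μ ν : Fin n),
      RicciC g G μ ν x + Λ * g x μ ν
        - symGrad g G (fun σ y => constraintForm g G g0 G0 σ y) μ ν x = 0) :
    ∀ (x : Fin n → ℝ) (ν : Fin n),
      -2 * covDiv2 g G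
        (fun μ ν' y => traceRevT g G
          (fun α β z => symGrad g G (fun σ w => constraintForm g G g0 G0 σ w) α β z)
          μ ν' y) ν x = 0 := by
  intro x ν
  have hK : ∀ (z : Fin n → ℝ) (α β : Fin n),
      symGrad g G (fun σ w => constraintForm g G g0 G0 σ w) α β z
        = RicciC g G α β z + Λ * g z α β := fun z α β => by
    have := hEinstein z α β; linarith
  have htrg : ∀ y : Fin n → ℝ, (∑ α, ∑ β, G y α β * g y α β) = (n : ℝ) := by
    intro y
    have h1 : ∀ α : Fin n, (∑ β, G y α β * g y β α) = 1 := by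
      intro α; rw [TK.Gg_delta g G hg_symm hinv y α α]; simp
    calc (∑ α, ∑ β, G y α β * g y α β)
        = ∑ α, ∑ β, G y α β * g y β α := Finset.sum_congr rfl fun α _ =>
            Finset.sum_congr rfl fun β _ => by rw [hg_symm y α β]
      _ = ∑ _α : Fin n, (1:ℝ) := Finset.sum_congr rfl fun α _ => h1 α
      _ = n := by simp
  have htrRic : ∀ y : Fin n → ℝ,
      (∑ α, ∑ β, G y α β * RicciC g G α β y) = TK.Rs g G y := by
    intro y
    rw [Finset.sum_comm]
    exact Finset.sum_congr rfl fun b _ => Finset.sum_congr rfl fun a _ => by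
      rw [TK.G_symm g G hg_symm hinv y a b]
  have hTfun : (fun μ ν' y => traceRevT g G
      (fun α β z => symGrad g G (fun σ w => constraintForm g G g0 G0 σ w) α β z) μ ν' y)
      = fun μ ν' y => RicciC g G μ ν' y
          + (Λ - (1/2) * (TK.Rs g G y + Λ * n)) * g y μ ν' := by
    funext μ ν' y
    rw [traceRevT]
    have htr : (∑ α, ∑ β, G y α β *
        symGrad g G (fun σ w => constraintForm g G g0 G0 σ w) α β y)
        = TK.Rs g G y + Λ * n := by
      calc (∑ α, ∑ β, G y α β *
            symGrad g G (fun σ w => constraintForm g G g0 G0 σ w) α β y)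
          = ∑ α, ∑ β, (G y α β * RicciC g G α β y + Λ * (G y α β * g y α β)) :=
            Finset.sum_congr rfl fun α _ => Finset.sum_congr rfl fun β _ => by
              rw [hK y α β]; ring
        _ = (∑ α, ∑ β, G y α β * RicciC g G α β y)
              + Λ * ∑ α, ∑ β, G y α β * g y α β := by
            simp only [Finset.sum_add_distrib, Finset.mul_sum]
        _ = TK.Rs g G y + Λ * n := by rw [htrRic y, htrg y]
    rw [hK y μ ν', htr]
    ring
  rw [hTfun]
  have hc : TK.Sm (fun y => Λ - (1/2) * (TK.Rs g G y + Λ * (n:ℝ))) :=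
    (TK.Sm.const Λ).sub
      (((TK.Sm_Rs g G hg_smooth hG_smooth).add (TK.Sm.const (Λ * (n:ℝ)))).constMul (1/2))
  have hcpd : ∀ (x' : Fin n → ℝ) (ν' : Fin n),
      pd ν' (fun y => Λ - (1/2) * (TK.Rs g G y + Λ * (n:ℝ))) x'
        = -(1/2) * pd ν' (TK.Rs g G) x' := by
    intro x' ν'
    rw [TK.pd_sub (TK.Sm.const Λ)
      (((TK.Sm_Rs g G hg_smooth hG_smooth).add (TK.Sm.const (Λ * (n:ℝ)))).constMul (1/2)),
      TK.pd_const,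
      TK.pd_const_mul ((TK.Sm_Rs g G hg_smooth hG_smooth).add (TK.Sm.const (Λ * (n:ℝ)))),
      TK.pd_add (TK.Sm_Rs g G hg_smooth hG_smooth) (TK.Sm.const (Λ * (n:ℝ))), TK.pd_const]
    ring
  have hcov := TK.covdiv_einstein g G hg_smooth hG_smooth hg_symm hinv
    (fun y => Λ - (1/2) * (TK.Rs g G y + Λ * (n:ℝ))) hc hcpd ν x
  show -2 * (∑ μ, ∑ α, G x μ α *
      (pd α (fun y => RicciC g G μ ν y
          + (Λ - (1/2) * (TK.Rs g G y + Λ * (n:ℝ))) * g y μ ν) x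
        - (∑ σ, Christoffel g G σ α μ x *
            (RicciC g G σ ν x + (Λ - (1/2) * (TK.Rs g G x + Λ * (n:ℝ))) * g x σ ν))
        - ∑ σ, Christoffel g G σ α ν x *
            (RicciC g G μ σ x + (Λ - (1/2) * (TK.Rs g G x + Λ * (n:ℝ))) * g x μ σ))) = 0
  rw [hcov]
  ring

end
end
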